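/- arXiv:1206.6340 — 12 statements merged into one kernel-verified Lean document; each statement's English description precedes it below -/
import Mathlib

section
/- Let V be a finite-dimensional vector space over a field, and let x₁,…,x_m be linearly independent vectors in V with m < dim V allowed. Set x_{m+1} = -(x₁+⋯+x_m) and X = {x₁,…,x_m,x_{m+1}}. Then every permutation of X extends to a linear automorphism of V. -/
/-!
Write `y = (x₁, …, x_m, -(x₁ + ⋯ + x_m))`, so that `y₁ + ⋯ + y_{m+1} = 0`. On the span `W` of
the `xᵢ`, where they form a basis, the linear map sending `xⱼ ↦ y_{σ j}` therefore also sends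
`y_{m+1} ↦ y_{σ(m+1)}`; doing the same for `σ⁻¹` gives its inverse. An automorphism of `W`
extends to `V` by the identity on a complement. Finally, `y` is injective except when all its
entries coincide (only possible for `m = 1` in characteristic 2), in which case `X` is a point;
otherwise a permutation of `X` is a permutation of the indices of `y`.
-/

open Function

section SnocNegSum

variable {M N : Type*} [AddCommGroup M] [AddCommGroup N] {m : ℕ}

def snocNegSum (x : Fin m → M) : Fin (m + 1) → M :=
  Fin.snoc x (-∑ i, x i)

@[simp]
lemma snocNegSum_castSucc (x : Fin m → M) (j : Fin m) : snocNegSum x j.castSucc = x j :=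
  Fin.snoc_castSucc ..

@[simp]
lemma snocNegSum_last (x : Fin m → M) : snocNegSum x (Fin.last m) = -∑ i, x i :=
  Fin.snoc_last ..

lemma sum_snocNegSum (x : Fin m → M) : ∑ k, snocNegSum x k = 0 := by
  simp [Fin.sum_univ_castSucc]

lemma map_snocNegSum {F : Type*} [FunLike F M N] [AddMonoidHomClass F M N] (f : F)
    (x : Fin m → M) (k : Fin (m + 1)) : f (snocNegSum x k) = snocNegSum (f ∘ x) k := by
  induction k using Fin.lastCases <;> simp

lemma range_snocNegSum (x : Fin m → M) :
    Set.range (snocNegSum x) = Set.range x ∪ {-∑ i, x i} := by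
  rw [snocNegSum, Fin.range_snoc, Set.union_comm, Set.insert_eq]

end SnocNegSum

lemma LinearIndependent.eq_of_apply_eq_neg_sum {R M ι : Type*} [Ring R] [Nontrivial R]
    [AddCommGroup M] [Module R M] [Fintype ι] {x : ι → M} (hx : LinearIndependent R x) {k : ι}
    (hk : x k = -∑ i, x i) (j : ι) : j = k := by
  classical
  by_contra hjk
  refine hx.notMem_span_image (s := {j}ᶜ) (Set.notMem_compl_iff.mpr rfl) ?_
  have hxj : x j = -x k - ∑ i ∈ Finset.univ.erase j, x i := by
    rw [hk, ← Finset.add_sum_erase _ _ (Finset.mem_univ j)]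
    abel
  rw [hxj]
  refine sub_mem (neg_mem (Submodule.subset_span ⟨k, Ne.symm hjk, rfl⟩))
    (Submodule.sum_mem _ fun i hi => Submodule.subset_span ⟨i, ?_, rfl⟩)
  exact Finset.ne_of_mem_erase hi

lemma LinearIndependent.snocNegSum_eq_of_not_injective {R M : Type*} [Ring R] [Nontrivial R]
    [AddCommGroup M] [Module R M] {m : ℕ} {x : Fin m → M} (hx : LinearIndependent R x)
    (hy : ¬ Injective (snocNegSum x)) (k : Fin (m + 1)) : snocNegSum x k = -∑ i, x i := by
  obtain ⟨i, hi⟩ : ∃ i, x i = -∑ i, x i := by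
    simpa [snocNegSum, Fin.snoc_injective_iff, hx.injective] using hy
  induction k using Fin.lastCases with
  | last => simp
  | cast j => rw [snocNegSum_castSucc, hx.eq_of_apply_eq_neg_sum hi j, hi]

lemma Module.Basis.constr_snocNegSum {R M : Type*} [Ring R] [AddCommGroup M] [Module R M]
    {m : ℕ} (b : Module.Basis (Fin m) R M) (σ : Equiv.Perm (Fin (m + 1))) (k : Fin (m + 1)) :
    b.constr ℕ (fun j => snocNegSum b (σ j.castSucc)) (snocNegSum b k) = snocNegSum b (σ k) := by
  induction k using Fin.lastCases with
  | cast j => simp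
  | last =>
    have hsum : ∑ k, snocNegSum b (σ k) = 0 := by rw [Equiv.sum_comp σ]; exact sum_snocNegSum b
    rw [Fin.sum_univ_castSucc] at hsum
    simp only [snocNegSum_last, map_neg, map_sum, Module.Basis.constr_basis]
    exact neg_eq_of_add_eq_zero_right hsum

lemma Module.Basis.exists_linearEquiv_snocNegSum {R M : Type*} [Ring R] [AddCommGroup M]
    [Module R M] {m : ℕ} (b : Module.Basis (Fin m) R M) (σ : Equiv.Perm (Fin (m + 1))) :
    ∃ u : M ≃ₗ[R] M, ∀ k, u (snocNegSum b k) = snocNegSum b (σ k) := by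
  let f : Equiv.Perm (Fin (m + 1)) → M →ₗ[R] M := fun τ =>
    b.constr ℕ (fun j => snocNegSum b (τ j.castSucc))
  have hf τ k : f τ (snocNegSum b k) = snocNegSum b (τ k) := b.constr_snocNegSum τ k
  have hinv τ : f τ ∘ₗ f τ⁻¹ = LinearMap.id := b.ext fun j => by
    rw [LinearMap.comp_apply, LinearMap.id_apply, ← snocNegSum_castSucc b j, hf, hf,
      Equiv.Perm.inv_def, Equiv.apply_symm_apply]
  refine ⟨LinearEquiv.ofLinearMap (f σ) (f σ⁻¹) (hinv σ) ?_, hf σ⟩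
  simpa using hinv σ⁻¹

lemma Submodule.exists_linearEquiv_extend {K V : Type*} [DivisionRing K] [AddCommGroup V]
    [Module K V] (W : Submodule K V) (e : W ≃ₗ[K] W) :
    ∃ u : V ≃ₗ[K] V, ∀ w : W, u w = e w := by
  obtain ⟨C, hC⟩ := W.exists_isCompl
  let p := Submodule.prodEquivOfIsCompl W C hC
  exact ⟨p.symm ≪≫ₗ e.prodCongr (LinearEquiv.refl K C) ≪≫ₗ p, fun w => by simp [p]⟩

lemma LinearIndependent.exists_linearEquiv_snocNegSum {K V : Type*} [DivisionRing K]
    [AddCommGroup V] [Module K V] {m : ℕ} {x : Fin m → V} (hx : LinearIndependent K x)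
    (σ : Equiv.Perm (Fin (m + 1))) :
    ∃ u : V ≃ₗ[K] V, ∀ k, u (snocNegSum x k) = snocNegSum x (σ k) := by
  let b := Module.Basis.span hx
  have hb : Submodule.subtype _ ∘ b = x :=
    funext fun i => congrArg Subtype.val (Module.Basis.span_apply hx i)
  obtain ⟨e, he⟩ := b.exists_linearEquiv_snocNegSum σ
  obtain ⟨u, hu⟩ := Submodule.exists_linearEquiv_extend _ e
  refine ⟨u, fun k => ?_⟩
  have hW := congrArg Subtype.val (he k)
  rw [← hu] at hW
  simpa only [← Submodule.subtype_apply, map_snocNegSum, hb] using hW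

theorem stmt0_general {K V : Type*} [Field K] [AddCommGroup V] [Module K V]
    {m : ℕ} (x : Fin m → V) (hx : LinearIndependent K x)
    (X : Set V) (hX : X = Set.range x ∪ {-(∑ i, x i)})
    (s : Equiv.Perm X) :
    ∃ u : V ≃ₗ[K] V, ∀ p : X, u (p : V) = (s p : V) := by
  rw [← range_snocNegSum] at hX
  subst hX
  by_cases hy : Injective (snocNegSum x)
  · let e : Fin (m + 1) ≃ Set.range (snocNegSum x) := Equiv.ofInjective _ hy
    obtain ⟨u, hu⟩ := hx.exists_linearEquiv_snocNegSum (e.trans (s.trans e.symm))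
    refine ⟨u, fun p => ?_⟩
    simpa [e, Equiv.apply_ofInjective_symm] using hu (e.symm p)
  · have : Subsingleton (Set.range (snocNegSum x)) := by
      refine Set.subsingleton_coe _ |>.mpr ?_
      rintro _ ⟨a, rfl⟩ _ ⟨b, rfl⟩
      rw [hx.snocNegSum_eq_of_not_injective hy, hx.snocNegSum_eq_of_not_injective hy]
    exact ⟨LinearEquiv.refl K V, fun p => by rw [Subsingleton.elim (s p) p]; rfl⟩

/-- If `x 1, …, x m` are linearly independent and
`X = {x 1, …, x m, -(x 1 + ⋯ + x m)}`, then every permutation of `X`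
extends to a linear automorphism of `V`. -/
theorem stmt0 {K V : Type*} [Field K] [AddCommGroup V] [Module K V]
    [FiniteDimensional K V] (hdim : 2 ≤ Module.finrank K V)
    {m : ℕ} (x : Fin m → V) (hx : LinearIndependent K x)
    (X : Set V) (hX : X = Set.range x ∪ {-(∑ i, x i)})
    (s : Equiv.Perm X) :
    ∃ u : V ≃ₗ[K] V, ∀ p : X, u (p : V) = (s p : V) :=
  stmt0_general x hx X hX s
end

section
/- Let V be a finite-dimensional vector space over a division ring and X ⊂ V a finite subset with |X| ≥ 2 such that every permutation of X extends to a linear automorphism of V. Then either X consists of linearly independent vectors, or X = {x₁,…,x_m, -(x₁+⋯+x_m)} for some linearly independent vectors x₁,…,x_m. -/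
/-- Theorem 1: If every permutation of a finite subset `X` of `V`
(with at least two elements) extends to a linear automorphism of `V`, then `X`
consists of linearly independent vectors, or
`X = {x 1, …, x m, -(x 1 + ⋯ + x m)}` for linearly independent `x i`. -/
theorem stmt1 {K V : Type*} [DivisionRing K] [AddCommGroup V] [Module K V]
    [FiniteDimensional K V] (hdim : 2 ≤ Module.finrank K V)
    (X : Set V) (hfin : X.Finite) (h2 : 2 ≤ X.ncard)
    (hext : ∀ s : Equiv.Perm X, ∃ u : V ≃ₗ[K] V, ∀ p : X, u (p : V) = (s p : V)) :
    LinearIndependent K (Subtype.val : X → V) ∨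
      ∃ (m : ℕ) (x : Fin m → V), LinearIndependent K x ∧
        X = Set.range x ∪ {-(∑ i, x i)} := by
  classical
  haveI : Fintype X := hfin.fintype
  by_cases hLI : LinearIndependent K (Subtype.val : X → V)
  · exact Or.inl hLI
  right
  -- Key: any coefficient function of a relation is constant
  have key : ∀ g : X → K, (∑ p : X, g p • (p : V)) = 0 → ∀ a b : X, g a = g b := by
    intro g hg a b
    by_cases hab : a = b
    · rw [hab]
    obtain ⟨u, hu⟩ := hext (Equiv.swap a b)
    have h1 : (∑ p : X, g p • ((Equiv.swap a b p : X) : V)) = 0 := by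
      have := congrArg u hg
      rw [map_sum, map_zero] at this
      simpa only [map_smul, hu] using this
    have h2 : (∑ p : X, g (Equiv.swap a b p) • (p : V)) = 0 := by
      rw [← Equiv.sum_comp (Equiv.swap a b) (fun p => g (Equiv.swap a b p) • (p : V))]
      simpa only [Equiv.swap_apply_self] using h1
    have h3 : (∑ p : X, (g p - g (Equiv.swap a b p)) • (p : V)) = 0 := by
      simp only [sub_smul, Finset.sum_sub_distrib, hg, h2, sub_zero]
    have h4 : (∑ p ∈ ({a, b} : Finset X), (g p - g (Equiv.swap a b p)) • (p : V)) = 0 := by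
      rw [← h3]
      apply Finset.sum_subset (Finset.subset_univ _)
      intro p _ hp
      simp only [Finset.mem_insert, Finset.mem_singleton, not_or] at hp
      rw [Equiv.swap_apply_of_ne_of_ne hp.1 hp.2, sub_self, zero_smul]
    rw [Finset.sum_pair hab, Equiv.swap_apply_left, Equiv.swap_apply_right] at h4
    have h5 : (g a - g b) • ((a : V) - (b : V)) = 0 := by
      rw [← neg_sub (g a) (g b), neg_smul, ← sub_eq_add_neg] at h4
      rw [smul_sub]
      exact h4
    rcases smul_eq_zero.mp h5 with h | h
    · exact sub_eq_zero.mp h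
    · exact absurd (Subtype.coe_injective (sub_eq_zero.mp h)) hab
  -- Get a nontrivial relation
  obtain ⟨g, hg, i0, hi0⟩ := Fintype.not_linearIndependent_iff.mp hLI
  have hconst : ∀ p : X, g p = g i0 := fun p => key g hg p i0
  have hsum0 : (∑ p : X, (p : V)) = 0 := by
    have h6 : g i0 • (∑ p : X, (p : V)) = 0 := by
      rw [Finset.smul_sum, ← hg]
      exact Finset.sum_congr rfl fun p _ => by rw [hconst p]
    rcases smul_eq_zero.mp h6 with h | h
    · exact absurd h hi0
    · exact h
  have hne : X.Nonempty := by
    rcases Set.eq_empty_or_nonempty X with h | h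
    · simp [h] at h2
    · exact h
  obtain ⟨x0, hx0⟩ := hne
  set F : Finset V := X.toFinset with hF
  have hx0F : x0 ∈ F := by simpa [hF] using hx0
  have hcoeF : (F : Set V) = X := by simp [hF]
  have htrans : ∀ f : V → V, (∑ p : X, f (p : V)) = ∑ v ∈ F, f v := by
    intro f
    rw [← Finset.sum_coe_sort F f]
    exact Fintype.sum_equiv (Equiv.subtypeEquivRight (fun v => by simp [hF])) _ _
      (fun p => rfl)
  have hFsum : (∑ v ∈ F, v) = 0 := (htrans (fun v => v)).symm.trans hsum0
  have htransK : ∀ gg : V → K, (∑ p : X, gg (p : V) • (p : V)) = ∑ v ∈ F, gg v • v := by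
    intro gg
    rw [← Finset.sum_coe_sort F (fun v => gg v • v)]
    exact Fintype.sum_equiv (Equiv.subtypeEquivRight (fun v => by simp [hF])) _ _
      (fun p => rfl)
  have key' : ∀ gg : V → K, (∑ v ∈ F, gg v • v) = 0 →
      ∀ a ∈ X, ∀ b ∈ X, gg a = gg b := by
    intro gg hgg a ha b hb
    exact key (fun p => gg (p : V)) ((htransK gg).trans hgg) ⟨a, ha⟩ ⟨b, hb⟩
  set T : Finset V := F.erase x0 with hT
  have hx0T : x0 ∉ T := Finset.notMem_erase _ _
  have hins : insert x0 T = F := Finset.insert_erase hx0F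
  have hTindep : ∀ h : V → K, (∑ v ∈ T, h v • v) = 0 → ∀ v ∈ T, h v = 0 := by
    intro h hrel v hv
    set g' : V → K := fun w => if w = x0 then 0 else h w with hg'
    have hgF : (∑ w ∈ F, g' w • w) = 0 := by
      rw [← hins, Finset.sum_insert hx0T]
      have h7 : (∑ w ∈ T, g' w • w) = ∑ w ∈ T, h w • w := by
        refine Finset.sum_congr rfl fun w hw => ?_
        have hwne : w ≠ x0 := Finset.ne_of_mem_erase hw
        simp [hg', hwne]
      simp only [hg', if_pos rfl, zero_smul, zero_add]
      rw [h7, hrel]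
    have hvX : v ∈ X := by
      have := Finset.mem_of_mem_erase hv
      simpa [hF] using this
    have h8 := key' g' hgF v hvX x0 hx0
    have h9 : g' x0 = 0 := by simp [hg']
    have h10 : g' v = h v := by simp [hg', Finset.ne_of_mem_erase hv]
    rw [← h10, h8, h9]
  refine ⟨T.card, fun i => ((T.equivFin.symm i : V)), ?_, ?_⟩
  · have hval : LinearIndependent K (Subtype.val : T → V) := by
      rw [Fintype.linearIndependent_iff]
      intro h hrel t
      set hV : V → K := fun v => if hv : v ∈ T then h ⟨v, hv⟩ else 0 with hhV
      have h9 : (∑ v ∈ T, hV v • v) = 0 := by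
        rw [← Finset.sum_coe_sort T (fun v => hV v • v), ← hrel]
        refine Finset.sum_congr rfl fun p _ => ?_
        simp [hhV, p.2]
      have := hTindep hV h9 t t.2
      simpa [hhV, t.2] using this
    exact hval.comp _ T.equivFin.symm.injective
  · have h10 : x0 + ∑ v ∈ T, v = 0 := by
      have h11 : (∑ v ∈ insert x0 T, v) = 0 := by rw [hins]; exact hFsum
      rwa [Finset.sum_insert hx0T] at h11
    have hTs : (∑ v ∈ T, v) = -x0 := eq_neg_of_add_eq_zero_right h10
    have hxs : (∑ i, ((T.equivFin.symm i : V))) = -x0 :=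
      (Equiv.sum_comp T.equivFin.symm (fun t : T => (t : V))).trans
        ((Finset.sum_coe_sort T (fun v => v)).trans hTs)
    have hrange : Set.range (fun i => ((T.equivFin.symm i : V))) = (T : Set V) := by
      have h12 : (fun i => ((T.equivFin.symm i : V))) = Subtype.val ∘ T.equivFin.symm := rfl
      rw [h12, Set.range_comp, Equiv.range_eq_univ, Set.image_univ,
        Subtype.range_coe_subtype]
      rfl
    have hcoeT : (T : Set V) = X \ {x0} := by rw [hT, Finset.coe_erase, hcoeF]
    show X = Set.range (fun i => ((T.equivFin.symm i : V))) ∪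
        {-(∑ i, ((T.equivFin.symm i : V)))}
    rw [hxs, neg_neg, hrange, hcoeT]
    exact (Set.diff_union_of_subset (Set.singleton_subset_iff.mpr hx0)).symm
end

section
/- Let V be an n-dimensional vector space over a division ring, n ≥ 2, and G ≤ GL(V) isomorphic to the symmetric group S_m. Suppose X is an orbit of G on V with |X| = m on which G acts faithfully, and V has no proper nonzero G-invariant subspace. Then X is a basis of V, or X = {x₁,…,x_n, -(x₁+⋯+x_n)} for some basis x₁,…,x_n of V. -/
open Module Submodule

/-- Corollary 1: Let `G ≤ GL(V)` be isomorphic to `S m`, let `X` be a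
`G`-orbit with `|X| = m` on which `G` acts faithfully, and suppose `V` has no proper
nonzero `G`-invariant subspace.  Then `X` is a basis of `V`, or
`X = {x 1, …, x n, -(x 1 + ⋯ + x n)}` for some basis `x 1, …, x n`. -/
theorem stmt3 {K V : Type*} [DivisionRing K] [AddCommGroup V] [Module K V]
    [FiniteDimensional K V] {n m : ℕ} (hn : Module.finrank K V = n) (h2 : 2 ≤ n)
    (G : Subgroup (V ≃ₗ[K] V)) (hG : Nonempty (G ≃* Equiv.Perm (Fin m)))
    (v₀ : V) (X : Set V) (hX : X = {w : V | ∃ g ∈ G, g v₀ = w})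
    (hcard : X.ncard = m)
    (hfaith : ∀ g ∈ G, (∀ x ∈ X, g x = x) → g = 1)
    (hirr : ∀ W : Submodule K V,
      (∀ g ∈ G, W.map (g : V →ₗ[K] V) = W) → W = ⊥ ∨ W = ⊤) :
    (LinearIndependent K (Subtype.val : X → V) ∧ Submodule.span K X = ⊤) ∨
      ∃ x : Fin n → V, LinearIndependent K x ∧ Submodule.span K (Set.range x) = ⊤ ∧
        X = Set.range x ∪ {-(∑ i, x i)} := by
  classical
  obtain ⟨φG⟩ := hG
  -- If every element of G is the identity, we get a contradiction with irreducibility.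
  have htriv : ¬ (∀ g ∈ G, g = (1 : V ≃ₗ[K] V)) := by
    intro hall
    have hnt : Nontrivial V := Module.nontrivial_of_finrank_pos (R := K) (by omega)
    obtain ⟨v, hv⟩ := exists_ne (0 : V)
    rcases hirr (Submodule.span K {v}) (fun g hg => by rw [hall g hg]; simp) with h | h
    · exact hv (by simpa [h] using Submodule.mem_span_singleton_self (R := K) v)
    · have h1 := finrank_span_singleton (K := K) hv
      rw [h, finrank_top, hn] at h1; omega
  -- m ≥ 2
  rcases Nat.lt_or_ge m 2 with hm | hm
  · exfalso
    apply htriv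
    intro g hg
    haveI : Subsingleton (Fin m) := ⟨fun a b => Fin.ext (by omega)⟩
    have hsub : (⟨g, hg⟩ : G) = 1 := φG.injective (Equiv.ext fun a => Subsingleton.elim _ _)
    exact congrArg Subtype.val hsub
  have hXfin : X.Finite := by
    by_contra h
    rw [Set.Infinite.ncard h] at hcard
    omega
  haveI := hXfin.fintype
  have hv₀X : v₀ ∈ X := by rw [hX]; exact ⟨1, G.one_mem, rfl⟩
  haveI : Nonempty ↥X := ⟨⟨v₀, hv₀X⟩⟩
  have hcardX : Fintype.card ↥X = m := by
    rw [← hcard, Set.ncard_eq_toFinset_card']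
    exact (Set.toFinset_card X).symm
  -- G maps X to itself
  have hmaps : ∀ g ∈ G, ∀ z ∈ X, (g : V ≃ₗ[K] V) z ∈ X := by
    intro g hg z hz
    rw [hX] at hz ⊢
    obtain ⟨g₀, hg₀, rfl⟩ := hz
    exact ⟨g * g₀, G.mul_mem hg hg₀, rfl⟩
  -- the permutation of X induced by g ∈ G
  have hbij : ∀ g : G, Function.Bijective
      (fun z : ↥X => (⟨(g : V ≃ₗ[K] V) z.val, hmaps g g.2 z.val z.2⟩ : ↥X)) := by
    intro g
    refine Finite.injective_iff_bijective.1 ?_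
    intro z w h
    exact Subtype.ext ((g : V ≃ₗ[K] V).injective (congrArg Subtype.val h))
  let p : G → Equiv.Perm ↥X := fun g => Equiv.ofBijective _ (hbij g)
  have hp : ∀ (g : G) (z : ↥X), ((p g z : ↥X) : V) = (g : V ≃ₗ[K] V) z.val := fun g z => rfl
  have pinj : Function.Injective p := by
    intro g g' h
    have hk : ∀ x ∈ X, ((g⁻¹ * g' : G) : V ≃ₗ[K] V) x = x := by
      intro x hx
      have h1 : (g : V ≃ₗ[K] V) x = (g' : V ≃ₗ[K] V) x := by
        have := congrArg Subtype.val (congrArg (fun q : Equiv.Perm ↥X => q ⟨x, hx⟩) h)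
        simpa [hp] using this
      have : ((g⁻¹ * g' : G) : V ≃ₗ[K] V) x = (g : V ≃ₗ[K] V)⁻¹ ((g' : V ≃ₗ[K] V) x) := by
        simp [mul_comm]
      rw [this, ← h1]
      exact (g : V ≃ₗ[K] V).symm_apply_apply x
    have := hfaith _ (g⁻¹ * g' : G).2 hk
    have h1 : (g⁻¹ * g' : G) = 1 := Subtype.ext this
    exact inv_mul_eq_one.mp h1
  haveI : Fintype G := Fintype.ofEquiv _ φG.toEquiv.symm
  have psurj : Function.Surjective p := by
    have hc : Fintype.card G = Fintype.card (Equiv.Perm ↥X) := by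
      rw [Fintype.card_congr φG.toEquiv, Fintype.card_perm, Fintype.card_perm,
        Fintype.card_fin, hcardX]
    exact ((Fintype.bijective_iff_injective_and_card p).2 ⟨pinj, hc⟩).2
  -- the sum of the orbit is zero
  set s : V := ∑ z : ↥X, (z : V) with hs
  have hgX : ∀ g : G, (g : V ≃ₗ[K] V) s = s := by
    intro g
    rw [hs, map_sum]
    calc ∑ z : ↥X, (g : V ≃ₗ[K] V) (z : V) = ∑ z : ↥X, ((p g z : ↥X) : V) := by
          simp [hp]
      _ = ∑ z : ↥X, (z : V) := Equiv.sum_comp (p g) (fun z : ↥X => (z : V))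
  have hs0 : s = 0 := by
    by_cases h0 : s = 0
    · exact h0
    exfalso
    have hinv : ∀ g ∈ G, (Submodule.span K {s}).map (g : V →ₗ[K] V) = Submodule.span K {s} := by
      intro g hg
      rw [Submodule.map_span, Set.image_singleton]
      have : (g : V →ₗ[K] V) s = s := hgX ⟨g, hg⟩
      rw [this]
    rcases hirr _ hinv with h | h
    · exact h0 (by rwa [Submodule.span_singleton_eq_bot] at h)
    · have h1 := finrank_span_singleton (K := K) h0
      rw [h, finrank_top, hn] at h1; omega
  -- key lemma: coefficients of a linear relation on X are constant
  have hkey : ∀ c : ↥X → K, ∑ z : ↥X, c z • (z : V) = 0 → ∀ z w : ↥X, c z = c w := by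
    intro c hc z w
    by_contra hne
    have hzw : z ≠ w := fun h => hne (h ▸ rfl)
    obtain ⟨g, hg⟩ := psurj (Equiv.swap z w)
    have hgz : ∀ u : ↥X, (g : V ≃ₗ[K] V) u.val = ((Equiv.swap z w) u : ↥X).val := by
      intro u; rw [← hp g u, hg]
    have h1 : ∑ u : ↥X, c u • ((Equiv.swap z w) u : ↥X).val = 0 := by
      have := congrArg (g : V ≃ₗ[K] V) hc
      rw [map_sum, map_zero] at this
      simpa only [map_smul, hgz] using this
    have h2 : ∑ u : ↥X, c ((Equiv.swap z w) u) • (u : V) = 0 := by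
      rw [← h1, ← Equiv.sum_comp (Equiv.swap z w)
        (fun u => c u • ((Equiv.swap z w) u : ↥X).val)]
      simp [Equiv.swap_apply_self]
    have h3 : ∑ u : ↥X, (c u - c ((Equiv.swap z w) u)) • (u : V) = 0 := by
      simp only [sub_smul]
      rw [Finset.sum_sub_distrib, hc, h2, sub_zero]
    have h4 : ∑ u ∈ ({z, w} : Finset ↥X), (c u - c ((Equiv.swap z w) u)) • (u : V) = 0 := by
      rw [Finset.sum_subset (Finset.subset_univ _) ?_]
      · exact h3
      intro u _ hu
      simp only [Finset.mem_insert, Finset.mem_singleton] at hu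
      push_neg at hu
      rw [Equiv.swap_apply_of_ne_of_ne hu.1 hu.2, sub_self, zero_smul]
    rw [Finset.sum_pair hzw, Equiv.swap_apply_left, Equiv.swap_apply_right] at h4
    have h6 : (c z - c w) • ((z : V) - (w : V)) = 0 := by
      rw [smul_sub, sub_eq_add_neg, ← neg_smul]
      rw [neg_sub]
      exact h4
    rcases smul_eq_zero.1 h6 with h | h
    · exact hne (sub_eq_zero.1 h)
    · exact hzw (Subtype.ext (sub_eq_zero.1 h))
  -- span X = ⊤
  have hspanX : Submodule.span K X = ⊤ := by
    have hinv : ∀ g ∈ G, (Submodule.span K X).map (g : V →ₗ[K] V) = Submodule.span K X := by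
      intro g hg
      rw [Submodule.map_span]
      congr 1
      ext v
      constructor
      · rintro ⟨u, hu, rfl⟩
        exact hmaps g hg u hu
      · intro hv
        refine ⟨(g : V ≃ₗ[K] V).symm v, ?_, by simp⟩
        have hginv : (g⁻¹ : V ≃ₗ[K] V) ∈ G := G.inv_mem hg
        have : (g⁻¹ : V ≃ₗ[K] V) v ∈ X := hmaps _ hginv v hv
        simpa using this
    rcases hirr _ hinv with h | h
    · exfalso
      apply htriv
      intro g hg
      apply hfaith g hg
      intro x hx
      have : x = 0 := by
        have := Submodule.subset_span (R := K) hx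
        rw [h] at this
        simpa using this
      rw [this]; simp
    · exact h
  -- rank-nullity: m = n + 1
  let φ : (↥X → K) →ₗ[K] V :=
    { toFun := fun c => ∑ z : ↥X, c z • (z : V)
      map_add' := by intro a b; simp [add_smul, Finset.sum_add_distrib]
      map_smul' := by intro a b; simp [mul_smul, Finset.smul_sum]
      }
  have hφ : ∀ c : ↥X → K, φ c = ∑ z : ↥X, c z • (z : V) := fun _ => rfl
  have hrange : LinearMap.range φ = ⊤ := by
    rw [← top_le_iff, ← hspanX, Submodule.span_le]
    intro v hv
    refine LinearMap.mem_range.2 ⟨Pi.single (⟨v, hv⟩ : ↥X) 1, ?_⟩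
    rw [hφ]
    rw [Finset.sum_eq_single (⟨v, hv⟩ : ↥X)]
    · simp
    · intro b _ hb
      rw [Pi.single_eq_of_ne hb, zero_smul]
    · intro h; exact absurd (Finset.mem_univ _) h
  have hker : LinearMap.ker φ = Submodule.span K {(1 : ↥X → K)} := by
    apply le_antisymm
    · intro c hc
      have hcc := hkey c (by rw [← hφ]; exact LinearMap.mem_ker.1 hc)
      rw [Submodule.mem_span_singleton]
      obtain ⟨z₀⟩ := (inferInstance : Nonempty ↥X)
      refine ⟨c z₀, funext fun w => ?_⟩
      simp only [Pi.smul_apply, Pi.one_apply, smul_eq_mul, mul_one]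
      exact hcc z₀ w
    · rw [Submodule.span_le, Set.singleton_subset_iff]
      refine LinearMap.mem_ker.2 ?_
      rw [hφ]
      simpa using hs0
  have h1ne : (1 : ↥X → K) ≠ 0 := by
    intro h
    obtain ⟨z₀⟩ := (inferInstance : Nonempty ↥X)
    exact one_ne_zero (congrFun h z₀)
  have hmn : m = n + 1 := by
    have h1 := LinearMap.finrank_range_add_finrank_ker φ
    rw [hrange, hker, finrank_top, finrank_span_singleton h1ne,
      Module.finrank_fintype_fun_eq_card, hcardX, hn] at h1
    omega
  -- construct the basis
  set z₀ : ↥X := ⟨v₀, hv₀X⟩ with hz₀def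
  set T : Finset ↥X := Finset.univ.erase z₀ with hT
  have hTcard : Fintype.card ↥T = n := by
    rw [Fintype.card_coe, hT, Finset.card_erase_of_mem (Finset.mem_univ _),
      Finset.card_univ, hcardX, hmn]
    omega
  set e : Fin n ≃ ↥T := (Fintype.equivFinOfCardEq hTcard).symm with he
  set x : Fin n → V := fun i => (((e i : ↥T) : ↥X) : V) with hxdef
  have hsumT : ∑ i, x i = -v₀ := by
    have h1 : ∑ i, x i = ∑ u ∈ T, (u : V) := by
      rw [← Finset.sum_coe_sort T (fun u : ↥X => (u : V))]
      exact Equiv.sum_comp e (fun t : ↥T => ((t : ↥X) : V))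
    have h2 : (z₀ : V) + ∑ u ∈ T, (u : V) = s :=
      Finset.add_sum_erase _ _ (Finset.mem_univ z₀)
    rw [hs0] at h2
    rw [h1]
    exact eq_neg_of_add_eq_zero_right h2
  have hrangex : Set.range x = X \ {v₀} := by
    ext v
    constructor
    · rintro ⟨i, rfl⟩
      refine ⟨((e i : ↥T) : ↥X).2, ?_⟩
      have hmem := Finset.mem_erase.1 (e i).2
      intro hv
      rw [Set.mem_singleton_iff] at hv
      exact hmem.1 (Subtype.ext hv)
    · rintro ⟨hvX, hv⟩
      rw [Set.mem_singleton_iff] at hv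
      have hmem : (⟨v, hvX⟩ : ↥X) ∈ T := by
        rw [hT, Finset.mem_erase]
        exact ⟨fun h => hv (congrArg Subtype.val h), Finset.mem_univ _⟩
      exact ⟨e.symm ⟨_, hmem⟩, by simp [hxdef]⟩
  have hli : LinearIndependent K x := by
    rw [Fintype.linearIndependent_iff]
    intro c hc i
    set C : ↥X → K := fun u => if h : u ∈ T then c (e.symm ⟨u, h⟩) else 0 with hC
    have hCz₀ : C z₀ = 0 := dif_neg (Finset.notMem_erase _ _)
    have hCei : ∀ j : Fin n, C ((e j : ↥T) : ↥X) = c j := by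
      intro j
      rw [hC]
      simp only
      rw [dif_pos (e j).2]
      congr 1
      rw [show (⟨((e j : ↥T) : ↥X), (e j).2⟩ : ↥T) = e j from Subtype.ext rfl]
      exact e.symm_apply_apply j
    have hCsum : ∑ u : ↥X, C u • (u : V) = 0 := by
      rw [← Finset.add_sum_erase Finset.univ (fun u : ↥X => C u • (u : V))
        (Finset.mem_univ z₀), hCz₀, zero_smul, zero_add,
        ← Finset.sum_coe_sort T (fun u : ↥X => C u • (u : V)),
        ← Equiv.sum_comp e (fun t : ↥T => C (t : ↥X) • ((t : ↥X) : V))]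
      calc ∑ j, C ((e j : ↥T) : ↥X) • (((e j : ↥T) : ↥X) : V)
          = ∑ j, c j • x j := by
            refine Finset.sum_congr rfl fun j _ => ?_
            rw [hCei j]
        _ = 0 := hc
    have hconst := hkey C hCsum
    have := (hconst ((e i : ↥T) : ↥X) z₀).trans hCz₀
    rwa [hCei i] at this
  have hspanx : Submodule.span K (Set.range x) = ⊤ := by
    have hXsub : X ⊆ ↑(Submodule.span K (Set.range x)) := by
      intro v hv
      by_cases hvv : v = v₀
      · subst hvv
        have hveq : v = -∑ i, x i := by rw [hsumT, neg_neg]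
        rw [hveq]
        exact neg_mem (Submodule.sum_mem _ (fun i _ => Submodule.subset_span ⟨i, rfl⟩))
      · exact Submodule.subset_span (hrangex ▸ ⟨hv, hvv⟩)
    rw [← top_le_iff, ← hspanX]
    exact Submodule.span_le.2 hXsub
  right
  refine ⟨x, hli, hspanx, ?_⟩
  rw [hrangex, hsumT, neg_neg]
  exact (Set.diff_union_of_subset (Set.singleton_subset_iff.2 hv₀X)).symm
end

section
/- Let V be an n-dimensional vector space over a division ring and X a G-orbit of a subgroup G ≤ GL(V) with G ≅ S_m acting faithfully on X. Then |X| ≥ m. -/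
/-- If `G ≤ GL(V)` is isomorphic to `S m` and `X` is a `G`-orbit on
which `G` acts faithfully, then `|X| ≥ m`. -/
theorem stmt4 {K V : Type*} [DivisionRing K] [AddCommGroup V] [Module K V]
    [FiniteDimensional K V] {m : ℕ}
    (G : Subgroup (V ≃ₗ[K] V)) (hG : Nonempty (G ≃* Equiv.Perm (Fin m)))
    (v₀ : V) (X : Set V) (hX : X = {w : V | ∃ g ∈ G, g v₀ = w})
    (hfaith : ∀ g ∈ G, (∀ x ∈ X, g x = x) → g = 1) :
    (m : Cardinal) ≤ Cardinal.mk X := by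
  by_cases hfin : Finite X
  case neg =>
    have : Infinite X := not_finite_iff_infinite.mp hfin
    calc (m : Cardinal) ≤ Cardinal.aleph0 := (Cardinal.nat_lt_aleph0 m).le
      _ ≤ Cardinal.mk X := Cardinal.infinite_iff.mp this
  case pos =>
    classical
    have hmem : ∀ (g : V ≃ₗ[K] V), g ∈ G → ∀ x ∈ X, g x ∈ X := by
      intro g hg x hx
      rw [hX] at hx ⊢
      obtain ⟨h, hh, rfl⟩ := hx
      exact ⟨g * h, mul_mem hg hh, rfl⟩
    let φ : G →* Equiv.Perm X :=
      { toFun := fun g =>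
          { toFun := fun x => ⟨g.1 x.1, hmem g.1 g.2 x.1 x.2⟩
            invFun := fun x => ⟨g.1⁻¹ x.1, hmem g.1⁻¹ (inv_mem g.2) x.1 x.2⟩
            left_inv := fun x => Subtype.ext (g.1.symm_apply_apply x.1)
            right_inv := fun x => Subtype.ext (g.1.apply_symm_apply x.1) }
        map_one' := by ext x; rfl
        map_mul' := fun g h => by ext x; rfl }
    have hinj : Function.Injective φ := by
      refine (injective_iff_map_eq_one φ).mpr ?_
      intro g hg1
      refine Subtype.ext (hfaith g.1 g.2 ?_)
      intro x hx
      exact congrArg Subtype.val (Equiv.ext_iff.mp hg1 ⟨x, hx⟩)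
    have hGfin : Finite G := Finite.of_equiv _ hG.some.toEquiv.symm
    have hcardG : Nat.card G = Nat.factorial m := by
      rw [Nat.card_congr hG.some.toEquiv, Nat.card_eq_fintype_card,
        Fintype.card_perm, Fintype.card_fin]
    have hle : Nat.card G ≤ Nat.card (Equiv.Perm X) :=
      Nat.card_le_card_of_injective φ hinj
    have hcardPerm : Nat.card (Equiv.Perm X) = Nat.factorial (Nat.card X) := by
      haveI : Fintype X := Fintype.ofFinite X
      rw [Nat.card_eq_fintype_card, Fintype.card_perm, Nat.card_eq_fintype_card]
    have hne : Nonempty X := ⟨⟨v₀, hX ▸ ⟨1, one_mem G, rfl⟩⟩⟩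
    have hpos : 0 < Nat.card X := Nat.card_pos
    have hfact : Nat.factorial m ≤ Nat.factorial (Nat.card X) := by
      rw [← hcardG, ← hcardPerm]; exact hle
    have hm : m ≤ Nat.card X := by
      by_contra hlt
      push_neg at hlt
      exact absurd hfact (not_le.mpr ((Nat.factorial_lt hpos).mpr hlt))
    calc (m : Cardinal) ≤ (Nat.card X : Cardinal) := by exact_mod_cast hm
      _ = Cardinal.mk X := by
          haveI : Fintype X := Fintype.ofFinite X
          rw [Nat.card_eq_fintype_card, Cardinal.mk_fintype]
end

section
/- Let V be a vector space of dimension n ≥ 2 over a field and 2 ≤ m ≤ n. Every permutation of an m-simplex in P(V) extends to an element of PGL(V). -/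
/-- A finite set of lines is *independent* if some choice of nonzero representative
vectors is linearly independent. -/
def IndepLines (K : Type*) {V : Type*} [DivisionRing K] [AddCommGroup V] [Module K V]
    (𝒳 : Set (Submodule K V)) : Prop :=
  ∃ x : 𝒳 → V, (∀ P : 𝒳, x P ∈ (P : Submodule K V) ∧ x P ≠ 0) ∧ LinearIndependent K x

/-- An `(m+1)`-element subset of `P(V)` is an *`m`-simplex* if it is not independent
but every `m`-element subset of it is independent. -/
def IsSimplex (K : Type*) {V : Type*} [DivisionRing K] [AddCommGroup V] [Module K V]
    (m : ℕ) (𝒳 : Set (Submodule K V)) : Prop :=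
  𝒳.Finite ∧ 𝒳.ncard = m + 1 ∧ (∀ P ∈ 𝒳, Module.finrank K P = 1) ∧
    ¬ IndepLines K 𝒳 ∧ ∀ 𝒴 ⊆ 𝒳, 𝒴.ncard = m → IndepLines K 𝒴

/-!
Choose nonzero representatives of the `m + 1` lines of a simplex. They satisfy a linear
relation, and since any `m` of them are independent every coefficient of that relation is
nonzero; rescaling, the representatives `x P` satisfy `∑ P, x P = 0`. Dropping one line leaves
a linearly independent family, so for a permutation `s` there is a linear automorphism sending
`x P ↦ x (s P)` for all `P` but one, and the relation `∑ P, x P = 0` forces the remaining one.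
-/

open Module

lemma LinearIndependent.exists_linearEquiv_apply_eq {K V ι : Type*} [Field K] [AddCommGroup V]
    [Module K V] [Finite ι] {b c : ι → V} (hb : LinearIndependent K b)
    (hc : LinearIndependent K c) : ∃ u : V ≃ₗ[K] V, ∀ i, u (b i) = c i := by
  have : FiniteDimensional K (Submodule.span K (Set.range b)) :=
    FiniteDimensional.span_of_finite K (Set.finite_range b)
  obtain ⟨u, hu⟩ := Submodule.exists_linearEquiv_restrict_eq
    ((Basis.span hb).equiv (Basis.span hc) (Equiv.refl ι))
  refine ⟨u, fun i => ?_⟩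
  have := hu (Basis.span hb i)
  rwa [Basis.equiv_apply, Equiv.refl_apply, Basis.span_apply, Basis.span_apply, eq_comm] at this

lemma exists_linearEquiv_apply_eq_apply_perm_of_sum_eq_zero {K V ι : Type*} [Field K]
    [AddCommGroup V] [Module K V] [Fintype ι] {x : ι → V} (hsum : ∑ i, x i = 0)
    (hind : ∀ i, LinearIndependent K (fun j : {j // j ≠ i} => x j.1)) (s : Equiv.Perm ι) :
    ∃ u : V ≃ₗ[K] V, ∀ i, u (x i) = x (s i) := by
  cases isEmpty_or_nonempty ι with
  | inl _ => exact ⟨LinearEquiv.refl K V, isEmptyElim⟩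
  | inr _ =>
    obtain ⟨i₀⟩ := ‹Nonempty ι›
    let e : {j // j ≠ i₀} ≃ {j // j ≠ s i₀} := s.subtypeEquiv fun j => s.injective.ne_iff.symm
    obtain ⟨u, hu⟩ := (hind i₀).exists_linearEquiv_apply_eq
      ((hind (s i₀)).comp e e.injective)
    refine ⟨u, fun i => ?_⟩
    have hdefect : ∑ j, (u (x j) - x (s j)) = 0 := by
      rw [Finset.sum_sub_distrib, ← map_sum, hsum, Equiv.sum_comp s x, hsum, map_zero, sub_zero]
    rw [Finset.sum_eq_single i₀ (fun j _ hj => sub_eq_zero.2 (hu ⟨j, hj⟩))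
      (fun h => absurd (Finset.mem_univ i₀) h)] at hdefect
    by_cases hi : i = i₀
    · exact hi ▸ sub_eq_zero.1 hdefect
    · exact hu ⟨i, hi⟩

section

variable {K V : Type*} [Field K] [AddCommGroup V] [Module K V]

lemma IndepLines.linearIndependent {𝒳 : Set (Submodule K V)}
    (hrank : ∀ P ∈ 𝒳, finrank K P = 1) (h : IndepLines K 𝒳) {w : 𝒳 → V}
    (hw : ∀ P : 𝒳, w P ∈ (P : Submodule K V) ∧ w P ≠ 0) : LinearIndependent K w := by
  obtain ⟨y, hy, hyind⟩ := h
  have hscale : ∀ P : 𝒳, ∃ c : Kˣ, (c : K) • y P = w P := by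
    intro P
    have hmem : w P ∈ K ∙ y P :=
      eq_span_singleton_of_mem_of_finrank_eq_one (hrank P P.2) (hy P).1 (hy P).2 ▸ (hw P).1
    obtain ⟨c, hc⟩ := Submodule.mem_span_singleton.1 hmem
    have hc0 : c ≠ 0 := by
      rintro rfl
      exact (hw P).2 (by rw [← hc, zero_smul])
    exact ⟨Units.mk0 c hc0, hc⟩
  choose c hc using hscale
  convert hyind.units_smul c using 1
  funext P
  rw [← hc, Pi.smul_apply', Units.smul_def]

namespace IsSimplex

variable {m : ℕ} {𝒳 : Set (Submodule K V)}

lemma linearIndependent_subtype_ne (h : IsSimplex K m 𝒳) {w : 𝒳 → V}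
    (hw : ∀ P : 𝒳, w P ∈ (P : Submodule K V) ∧ w P ≠ 0) (P₀ : 𝒳) :
    LinearIndependent K (fun P : {P : 𝒳 // P ≠ P₀} => w P) := by
  obtain ⟨_, hcard, hrank, _, hsub⟩ := h
  set 𝒴 := 𝒳 \ {(P₀ : Submodule K V)}
  have h𝒴 : IndepLines K 𝒴 := hsub 𝒴 Set.sdiff_subset <| by
    rw [Set.ncard_sdiff_singleton_of_mem P₀.2, hcard, Nat.add_sub_cancel]
  have hind : LinearIndependent K (fun Q : 𝒴 => w ⟨Q, Q.2.1⟩) :=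
    h𝒴.linearIndependent (fun P hP => hrank P hP.1) (fun Q => hw ⟨Q, Q.2.1⟩)
  let e : {P : 𝒳 // P ≠ P₀} → 𝒴 := fun P => ⟨P, P.1.2, fun hP => P.2 (Subtype.ext hP)⟩
  exact hind.comp e fun P Q hPQ => Subtype.ext <| Subtype.ext <|
    congrArg (fun Q : 𝒴 => (Q : Submodule K V)) hPQ

lemma exists_representatives_sum_eq_zero (h : IsSimplex K m 𝒳) [Fintype 𝒳] :
    ∃ x : 𝒳 → V, (∀ P : 𝒳, x P ∈ (P : Submodule K V) ∧ x P ≠ 0) ∧ ∑ P, x P = 0 := by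
  classical
  have ⟨_, _, hrank, hdep, _⟩ := h
  have hne : ∀ P : 𝒳, ∃ v ∈ (P : Submodule K V), v ≠ 0 := fun P =>
    Submodule.exists_mem_ne_zero_of_ne_bot fun hbot => by
      have hP := hrank P P.2
      rw [hbot, finrank_bot] at hP
      exact zero_ne_one hP
  choose v hv hv0 using hne
  obtain ⟨g, hg, P₁, hP₁⟩ := Fintype.not_linearIndependent_iff.1 fun hind =>
    hdep ⟨v, fun P => ⟨hv P, hv0 P⟩, hind⟩
  have hg0 : ∀ P, g P ≠ 0 := by
    intro P hP
    have hrel : ∑ Q : {Q : 𝒳 // Q ≠ P}, g Q • v Q = 0 := by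
      rwa [Fintype.sum_eq_add_sum_subtype_ne _ P, hP, zero_smul, zero_add] at hg
    have hzero := Fintype.linearIndependent_iff.1
      (h.linearIndependent_subtype_ne (fun P => ⟨hv P, hv0 P⟩) P) (fun Q => g Q) hrel
    by_cases h₁ : P₁ = P
    · exact hP₁ (h₁ ▸ hP)
    · exact hP₁ (hzero ⟨P₁, h₁⟩)
  exact ⟨fun P => g P • v P, fun P => ⟨Submodule.smul_mem _ _ (hv P),
    smul_ne_zero (hg0 P) (hv0 P)⟩, hg⟩

end IsSimplex

end

theorem stmt6_general {K V : Type*} [Field K] [AddCommGroup V] [Module K V] {m : ℕ}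
    (𝒳 : Set (Submodule K V)) (hsimp : IsSimplex K m 𝒳) (s : Equiv.Perm 𝒳) :
    ∃ u : V ≃ₗ[K] V, ∀ P : 𝒳,
      Submodule.map (u : V →ₗ[K] V) (P : Submodule K V) = (s P : Submodule K V) := by
  have ⟨hfin, _, hrank, _, _⟩ := hsimp
  have := hfin.fintype
  obtain ⟨x, hx, hsum⟩ := hsimp.exists_representatives_sum_eq_zero
  obtain ⟨u, hu⟩ := exists_linearEquiv_apply_eq_apply_perm_of_sum_eq_zero hsum
    (hsimp.linearIndependent_subtype_ne hx) s
  have hline : ∀ P : 𝒳, (P : Submodule K V) = K ∙ x P := fun P =>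
    eq_span_singleton_of_mem_of_finrank_eq_one (hrank P P.2) (hx P).1 (hx P).2
  refine ⟨u, fun P => ?_⟩
  rw [hline P, hline (s P), Submodule.map_span, Set.image_singleton, LinearEquiv.coe_coe, hu]

/-- Every permutation of an `m`-simplex (`2 ≤ m ≤ n`) in `P(V)` extends
to an element of `PGL(V)`. -/
theorem stmt6 {K V : Type*} [Field K] [AddCommGroup V] [Module K V]
    [FiniteDimensional K V] (hdim : 2 ≤ Module.finrank K V)
    {m : ℕ} (hm : 2 ≤ m) (hmn : m ≤ Module.finrank K V)
    (𝒳 : Set (Submodule K V)) (hsimp : IsSimplex K m 𝒳) (s : Equiv.Perm 𝒳) :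
    ∃ u : V ≃ₗ[K] V, ∀ P : 𝒳,
      Submodule.map (u : V →ₗ[K] V) (P : Submodule K V) = (s P : Submodule K V) :=
  stmt6_general 𝒳 hsimp s
end

section
/- Let {P₁,…,P_{m+1}} be an m-simplex in P(V), where V is a vector space over a division ring. Then there exist linearly independent vectors x₁ ∈ P₁,…,x_m ∈ P_m such that P_{m+1} = span(x₁+⋯+x_m). -/
open Module Submodule

section Lines

variable {K V : Type*} [DivisionRing K] [AddCommGroup V] [Module K V]

theorem Submodule.eq_span_singleton_of_finrank_eq_one {Q : Submodule K V}
    (hQ : finrank K Q = 1) {a : V} (ha : a ∈ Q) (ha0 : a ≠ 0) : Q = span K {a} := by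
  refine le_antisymm (fun v hv => ?_) (span_le.2 (Set.singleton_subset_iff.2 ha))
  obtain ⟨c, hc⟩ := (finrank_eq_one_iff_of_nonzero' (⟨a, ha⟩ : Q) (by simpa using ha0)).1 hQ
    ⟨v, hv⟩
  exact mem_span_singleton.2 ⟨c, congrArg Subtype.val hc⟩

theorem Submodule.exists_mem_ne_zero_of_finrank_eq_one {Q : Submodule K V}
    (hQ : finrank K Q = 1) : ∃ a ∈ Q, a ≠ 0 :=
  exists_mem_ne_zero_of_ne_bot fun h => by subst h; simp at hQ

theorem Submodule.exists_unit_smul_eq_of_finrank_eq_one {Q : Submodule K V}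
    (hQ : finrank K Q = 1) {a b : V} (ha : a ∈ Q) (ha0 : a ≠ 0) (hb : b ∈ Q) (hb0 : b ≠ 0) :
    ∃ c : Kˣ, c • a = b := by
  rw [eq_span_singleton_of_finrank_eq_one hQ ha ha0, mem_span_singleton] at hb
  obtain ⟨c, rfl⟩ := hb
  exact ⟨Units.mk0 c (left_ne_zero_of_smul hb0), rfl⟩

theorem LinearIndependent.of_mem_lines {ι : Type*} {Q : ι → Submodule K V}
    (hQ : ∀ i, finrank K (Q i) = 1) {a b : ι → V} (ha : ∀ i, a i ∈ Q i ∧ a i ≠ 0)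
    (hb : ∀ i, b i ∈ Q i ∧ b i ≠ 0) (h : LinearIndependent K a) : LinearIndependent K b := by
  choose c hc using fun i =>
    exists_unit_smul_eq_of_finrank_eq_one (hQ i) (ha i).1 (ha i).2 (hb i).1 (hb i).2
  rw [show b = c • a from funext fun i => (hc i).symm]
  exact h.units_smul c

variable {ι : Type*} {Q : ι → Submodule K V}

theorem IndepLines.linearIndependent_s7 (h : IndepLines K (Set.range Q))
    (hinj : Function.Injective Q) (hQ : ∀ i, finrank K (Q i) = 1) {w : ι → V}
    (hw : ∀ i, w i ∈ Q i ∧ w i ≠ 0) : LinearIndependent K w := by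
  obtain ⟨x, hx, hli⟩ := h
  let e := Equiv.ofInjective Q hinj
  exact (hli.comp e e.injective).of_mem_lines hQ (fun i => hx (e i)) hw

theorem indepLines_range_of_linearIndependent (hinj : Function.Injective Q) {w : ι → V}
    (hw : ∀ i, w i ∈ Q i ∧ w i ≠ 0) (hli : LinearIndependent K w) :
    IndepLines K (Set.range Q) := by
  let e := Equiv.ofInjective Q hinj
  refine ⟨w ∘ e.symm, fun P => ?_, hli.comp e.symm e.symm.injective⟩
  have hP := hw (e.symm P)
  rwa [Equiv.apply_ofInjective_symm hinj P] at hP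

end Lines

theorem exists_sum_smul_eq_zero_forall_ne_zero {R M : Type*} [Ring R] [AddCommGroup M]
    [Module R M] {n : ℕ} {w : Fin (n + 1) → M} (hdep : ¬ LinearIndependent R w)
    (hfacet : ∀ k : Fin (n + 1), LinearIndependent R (w ∘ k.succAbove)) :
    ∃ g : Fin (n + 1) → R, ∑ i, g i • w i = 0 ∧ ∀ i, g i ≠ 0 := by
  obtain ⟨g, hrel, j, hj⟩ := Fintype.not_linearIndependent_iff.1 hdep
  refine ⟨g, hrel, fun k hk => hj ?_⟩
  rw [Fin.sum_univ_succAbove _ k, hk, zero_smul, zero_add] at hrel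
  have hzero := Fintype.linearIndependent_iff.1 (hfacet k) (g ∘ k.succAbove) hrel
  obtain rfl | ⟨i, rfl⟩ := Fin.eq_self_or_eq_succAbove k j
  · exact hk
  · exact hzero i

theorem stmt7_general {K V : Type*} [DivisionRing K] [AddCommGroup V] [Module K V]
    {m : ℕ} (P : Fin (m + 1) → Submodule K V) (hinj : Function.Injective P)
    (hsimp : IsSimplex K m (Set.range P)) :
    ∃ x : Fin m → V, LinearIndependent K x ∧ (∀ i : Fin m, x i ∈ P i.castSucc) ∧
      P (Fin.last m) = Submodule.span K {∑ i, x i} := by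
  obtain ⟨-, -, hline, hdep, hfacets⟩ := hsimp
  have hP : ∀ i, finrank K (P i) = 1 := fun i => hline _ ⟨i, rfl⟩
  choose w hw using fun i => exists_mem_ne_zero_of_finrank_eq_one (hP i)
  have hfacet (k : Fin (m + 1)) : LinearIndependent K (w ∘ k.succAbove) := by
    have hinjk := hinj.comp k.succAbove_right_injective
    refine IndepLines.linearIndependent_s7 (hfacets _ (Set.range_comp_subset_range _ _) ?_)
      hinjk (fun i => hP _) (fun i => hw _)
    simp [Set.ncard_range_of_injective hinjk]
  obtain ⟨g, hrel, hg⟩ := exists_sum_smul_eq_zero_forall_ne_zero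
    (fun h => hdep (indepLines_range_of_linearIndependent hinj hw h)) hfacet
  refine ⟨fun i => g i.castSucc • w i.castSucc, ?_, fun i => smul_mem _ _ (hw _).1, ?_⟩
  · have hli := (hfacet (Fin.last m)).units_smul fun i => Units.mk0 _ (hg i.castSucc)
    rw [Fin.succAbove_last] at hli
    exact hli
  · rw [Fin.sum_univ_castSucc] at hrel
    rw [eq_neg_of_add_eq_zero_left hrel]
    exact eq_span_singleton_of_finrank_eq_one (hP _) (neg_mem (smul_mem _ _ (hw _).1))
      (neg_ne_zero.2 (smul_ne_zero (hg _) (hw _).2))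

/-- If `{P 1, …, P (m+1)}` is an `m`-simplex in `P(V)`, then there are
linearly independent vectors `x i ∈ P i` (`i ≤ m`) with
`P (m+1) = span (x 1 + ⋯ + x m)`. -/
theorem stmt7 {K V : Type*} [DivisionRing K] [AddCommGroup V] [Module K V]
    [FiniteDimensional K V] (hdim : 2 ≤ Module.finrank K V)
    {m : ℕ} (hm : 2 ≤ m) (hmn : m ≤ Module.finrank K V)
    (P : Fin (m + 1) → Submodule K V) (hinj : Function.Injective P)
    (hsimp : IsSimplex K m (Set.range P)) :
    ∃ x : Fin m → V, LinearIndependent K x ∧ (∀ i : Fin m, x i ∈ P i.castSucc) ∧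
      P (Fin.last m) = Submodule.span K {∑ i, x i} :=
  stmt7_general P hinj hsimp
end

section
/- Let R be a field of characteristic 3, V a vector space over R of dimension ≥ 2, and x, y linearly independent vectors. Then every permutation of the harmonic subset {⟨x⟩, ⟨y⟩, ⟨x+y⟩, ⟨x−y⟩} ⊂ P(V) extends to an element of PGL(V). -/
/-! The transpositions `(a b)` with `a` fixed generate the symmetric group, so it is enough to
realize the three transpositions exchanging `⟨x⟩` with another point of `𝒳`. Each is induced by
an involution of `span {x, y}`, extended to `V`: `x ↔ y`, `(x, y) ↦ (x + y, -y)` and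
`(x, y) ↦ (x - y, -y)`. The last two fix the remaining line only because `3 = 0`: they send
`x - y`, resp. `x + y`, to `x + 2y`, resp. `x - 2y`. -/

open Equiv Submodule

section LinearEquivExtension

variable {K V W : Type*} [Field K] [AddCommGroup V] [Module K V] [AddCommGroup W] [Module K W]

theorem LinearMap.exists_linearEquiv_comp_eq_of_injective {f : W →ₗ[K] V}
    (hf : Function.Injective f) (M : W ≃ₗ[K] W) :
    ∃ u : V ≃ₗ[K] V, ∀ w, u (f w) = f (M w) := by
  obtain ⟨g, hg⟩ := f.exists_leftInverse_of_injective (LinearMap.ker_eq_bot.mpr hf)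
  have hgf (w : W) : g (f w) = w := LinearMap.congr_fun hg w
  -- `φ N` acts as `N` along `f` and as the identity on `ker g`.
  let φ (N : W ≃ₗ[K] W) : V →ₗ[K] V :=
    LinearMap.id + f ∘ₗ ((N : W →ₗ[K] W) - LinearMap.id) ∘ₗ g
  have φ_apply (N : W ≃ₗ[K] W) (v : V) : φ N v = v + f (N (g v) - g v) := rfl
  have φ_symm (N : W ≃ₗ[K] W) (v : V) : φ N (φ N.symm v) = v := by
    simp only [φ_apply, map_add, map_sub, hgf, LinearEquiv.apply_symm_apply]
    abel
  refine ⟨.ofLinearMap (φ M) (φ M.symm) (LinearMap.ext (φ_symm M))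
    (LinearMap.ext (φ_symm M.symm)), fun w => ?_⟩
  simp [φ_apply, hgf]

theorem LinearIndependent.exists_linearEquiv_apply_eq_sum {ι : Type*} [Fintype ι] [DecidableEq ι]
    {v : ι → V} (hv : LinearIndependent K v) (A : Matrix ι ι K) (hA : IsUnit A.det) :
    ∃ u : V ≃ₗ[K] V, ∀ j, u (v j) = ∑ i, A i j • v i := by
  obtain ⟨u, hu⟩ := LinearMap.exists_linearEquiv_comp_eq_of_injective
    hv.fintypeLinearCombination_injective (A.toLinearEquiv' (A.invertibleOfIsUnitDet hA))
  refine ⟨u, fun j => ?_⟩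
  simpa [Fintype.linearCombination_apply, Matrix.toLinearEquiv'] using hu (Pi.single j 1)

theorem LinearIndependent.exists_linearEquiv_pair {x y : V} (hxy : LinearIndependent K ![x, y])
    {a b c d : K} (h : a * d - b * c ≠ 0) :
    ∃ u : V ≃ₗ[K] V, u x = a • x + b • y ∧ u y = c • x + d • y := by
  obtain ⟨u, hu⟩ := hxy.exists_linearEquiv_apply_eq_sum !![a, c; b, d]
    (by simpa [Matrix.det_fin_two, mul_comm b c] using h)
  exact ⟨u, by simpa [Fin.sum_univ_two] using hu 0, by simpa [Fin.sum_univ_two] using hu 1⟩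

end LinearEquivExtension

theorem Subgroup.eq_top_of_forall_swap_mem {α : Type*} [Finite α] [DecidableEq α]
    (H : Subgroup (Perm α)) (a : α) (h : ∀ b, swap a b ∈ H) : H = ⊤ := by
  rw [eq_top_iff, ← Perm.closure_isSwap, Subgroup.closure_le]
  rintro _ ⟨p, q, -, rfl⟩
  exact SubmonoidClass.swap_mem_trans H (swap_comm a p ▸ h p) (h q)

section InducedPerms

variable {K V : Type*} [Field K] [AddCommGroup V] [Module K V]

theorem Submodule.map_span_singleton_of_apply_eq_smul (u : V ≃ₗ[K] V) {v w : V} (c : Kˣ)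
    (h : u v = c • w) : (span K {v}).map (u : V →ₗ[K] V) = span K {w} := by
  rw [map_span, Set.image_singleton, LinearEquiv.coe_coe, h, span_singleton_group_smul_eq]

def inducedPerms (𝒳 : Set (Submodule K V)) : Subgroup (Perm 𝒳) where
  carrier := {σ | ∃ u : V ≃ₗ[K] V, ∀ P : 𝒳, (P : Submodule K V).map (u : V →ₗ[K] V) = σ P}
  one_mem' := ⟨LinearEquiv.refl K V, fun P => by simp⟩
  mul_mem' := by
    rintro σ τ ⟨u, hu⟩ ⟨w, hw⟩
    refine ⟨w.trans u, fun P => ?_⟩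
    rw [LinearEquiv.coe_trans, Submodule.map_comp, hw, hu]
    rfl
  inv_mem' := by
    rintro σ ⟨u, hu⟩
    refine ⟨u.symm, fun P => ?_⟩
    conv_lhs => rw [← σ.apply_symm_apply P, ← hu, ← Submodule.map_comp]
    simp [Perm.inv_def]

theorem swap_mem_inducedPerms {A B C D : Submodule K V} {𝒳 : Set (Submodule K V)}
    (h𝒳 : 𝒳 = {A, B, C, D}) (u : V ≃ₗ[K] V) (hA : A.map (u : V →ₗ[K] V) = B)
    (hB : B.map (u : V →ₗ[K] V) = A) (hC : C.map (u : V →ₗ[K] V) = C)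
    (hD : D.map (u : V →ₗ[K] V) = D) :
    swap ⟨A, by simp [h𝒳]⟩ ⟨B, by simp [h𝒳]⟩ ∈ inducedPerms 𝒳 := by
  refine ⟨u, fun ⟨P, hP⟩ => ?_⟩
  subst h𝒳
  rw [swap_apply_def]
  rcases hP with rfl | rfl | rfl | rfl <;> split_ifs <;> simp_all [Subtype.ext_iff]

theorem harmonic_swap_mem_inducedPerms {x y : V} (hxy : LinearIndependent K ![x, y])
    (h3 : (3 : K) = 0) {𝒳 : Set (Submodule K V)}
    (h𝒳 : 𝒳 = {span K {x}, span K {y}, span K {x + y}, span K {x - y}}) (P : 𝒳) :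
    swap ⟨span K {x}, by simp [h𝒳]⟩ P ∈ inducedPerms 𝒳 := by
  obtain ⟨P, hP⟩ := P
  rw [h𝒳] at hP
  rcases hP with rfl | rfl | rfl | rfl
  · rw [swap_self]
    exact one_mem _
  · obtain ⟨u, hx, hy⟩ := hxy.exists_linearEquiv_pair (a := 0) (b := 1) (c := 1) (d := 0) (by simp)
    exact swap_mem_inducedPerms h𝒳 u
      (map_span_singleton_of_apply_eq_smul u 1 (by simp [hx]))
      (map_span_singleton_of_apply_eq_smul u 1 (by simp [hy]))
      (map_span_singleton_of_apply_eq_smul u 1 (by simp [hx, hy, add_comm]))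
      (map_span_singleton_of_apply_eq_smul u (-1) (by simp [hx, hy]))
  · have h𝒳' : 𝒳 = {span K {x}, span K {x + y}, span K {y}, span K {x - y}} := by
      rw [h𝒳, Set.insert_comm (span K {y})]
    obtain ⟨u, hx, hy⟩ := hxy.exists_linearEquiv_pair (a := 1) (b := 1) (c := 0) (d := -1) (by simp)
    exact swap_mem_inducedPerms h𝒳' u
      (map_span_singleton_of_apply_eq_smul u 1 (by simp [hx]))
      (map_span_singleton_of_apply_eq_smul u 1 (by simp [hx, hy]))
      (map_span_singleton_of_apply_eq_smul u (-1) (by simp [hy]))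
      (map_span_singleton_of_apply_eq_smul u 1 (by
        simp only [map_sub, hx, hy, one_smul, zero_smul, zero_add]
        linear_combination (norm := module) h3 • y))
  · have h𝒳' : 𝒳 = {span K {x}, span K {x - y}, span K {y}, span K {x + y}} := by
      rw [h𝒳]
      ext
      simp only [Set.mem_insert_iff, Set.mem_singleton_iff]
      tauto
    obtain ⟨u, hx, hy⟩ := hxy.exists_linearEquiv_pair (a := 1) (b := -1) (c := 0) (d := -1) (by simp)
    exact swap_mem_inducedPerms h𝒳' u
      (map_span_singleton_of_apply_eq_smul u 1 (by simp [hx, sub_eq_add_neg]))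
      (map_span_singleton_of_apply_eq_smul u 1 (by simp [hx, hy]))
      (map_span_singleton_of_apply_eq_smul u (-1) (by simp [hy]))
      (map_span_singleton_of_apply_eq_smul u 1 (by
        simp only [map_add, hx, hy, one_smul, zero_smul, zero_add]
        linear_combination (norm := module) -h3 • y))

end InducedPerms

theorem stmt8_general {K V : Type*} [Field K] [AddCommGroup V] [Module K V]
    (hchar : ringChar K = 3)
    (x y : V) (hxy : LinearIndependent K ![x, y])
    (𝒳 : Set (Submodule K V))
    (h𝒳 : 𝒳 = {Submodule.span K {x}, Submodule.span K {y},
      Submodule.span K {x + y}, Submodule.span K {x - y}})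
    (s : Equiv.Perm 𝒳) :
    ∃ u : V ≃ₗ[K] V, ∀ P : 𝒳,
      Submodule.map (u : V →ₗ[K] V) (P : Submodule K V) = (s P : Submodule K V) := by
  have h3 : (3 : K) = 0 := by exact_mod_cast hchar ▸ ringChar.Nat.cast_ringChar
  have : Finite 𝒳 := h𝒳 ▸ Set.toFinite _
  have htop : inducedPerms 𝒳 = ⊤ := (inducedPerms 𝒳).eq_top_of_forall_swap_mem _
    (harmonic_swap_mem_inducedPerms hxy h3 h𝒳)
  exact (htop ▸ Subgroup.mem_top s : s ∈ inducedPerms 𝒳)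

/-- Example 2: If `char R = 3` and `x, y` are linearly independent,
then every permutation of the harmonic subset
`{⟨x⟩, ⟨y⟩, ⟨x+y⟩, ⟨x−y⟩}` of `P(V)` extends to an element of `PGL(V)`. -/
theorem stmt8 {K V : Type*} [Field K] [AddCommGroup V] [Module K V]
    [FiniteDimensional K V] (hdim : 2 ≤ Module.finrank K V)
    (hchar : ringChar K = 3)
    (x y : V) (hxy : LinearIndependent K ![x, y])
    (𝒳 : Set (Submodule K V))
    (h𝒳 : 𝒳 = {Submodule.span K {x}, Submodule.span K {y},
      Submodule.span K {x + y}, Submodule.span K {x - y}})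
    (s : Equiv.Perm 𝒳) :
    ∃ u : V ≃ₗ[K] V, ∀ P : 𝒳,
      Submodule.map (u : V →ₗ[K] V) (P : Submodule K V) = (s P : Submodule K V) :=
  stmt8_general hchar x y hxy 𝒳 h𝒳 s
end

section
/- Let V be a finite-dimensional vector space over a field R, dim V ≥ 2, and 𝒳 ⊂ P(V) a finite subset with at least two elements such that every permutation of 𝒳 extends to an element of PGL(V). Then 𝒳 is an independent subset, or an m-simplex for some 2 ≤ m ≤ dim V, or R has characteristic 3 and 𝒳 is a harmonic subset. -/
/-- A subset of `P(V)` is *harmonic* if it is `{⟨x⟩, ⟨y⟩, ⟨x+y⟩, ⟨x−y⟩}` for some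
linearly independent `x, y`. -/
def Harmonic (K : Type*) {V : Type*} [DivisionRing K] [AddCommGroup V] [Module K V]
    (𝒳 : Set (Submodule K V)) : Prop :=
  ∃ x y : V, LinearIndependent K ![x, y] ∧
    𝒳 = {Submodule.span K {x}, Submodule.span K {y},
      Submodule.span K {x + y}, Submodule.span K {x - y}}

/-!
Let `m + 1` be the least size of a dependent subset of `𝒳`. Permutations of `𝒳` extend to
linear automorphisms, which preserve independence, so independence of a subset of `𝒳` depends
only on its size: every `m` lines of `𝒳` are independent and every `m + 1` are dependent. If
`|𝒳| = m + 1`, then `𝒳` is an `m`-simplex.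

Otherwise fix `m` of the lines, `⟨e_j⟩`, and a further point `p`, with the `e_j` scaled so that
`p = ⟨∑ e_j⟩`; every other point is `⟨∑ c_j e_j⟩` with all `c_j ≠ 0`. An automorphism extending
the transposition of `⟨e_i⟩` and `p` is a multiple of `e_i ↦ ∑ e_j`, `e_k ↦ -e_k` (`k ≠ i`), and
it fixes `⟨∑ c_j e_j⟩` only if `c_i = 2 c_k`. Exchanging `i` and `k` gives `c_i = 4 c_i`, so
`char K = 3`, and a third index would force `2 = 0`. Hence `m = 2` and the only remaining point
is `⟨e_1 - e_2⟩`.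
-/

open Module Submodule Set

section Lines

variable {K V : Type*} [DivisionRing K] [AddCommGroup V] [Module K V]

theorem exists_eq_span_singleton_of_finrank_eq_one {P : Submodule K V} (h : finrank K P = 1) :
    ∃ v, v ≠ 0 ∧ P = K ∙ v := by
  obtain ⟨v, hvP, hv0⟩ := P.exists_mem_ne_zero_of_ne_bot (by rintro rfl; simp at h)
  exact ⟨v, hv0, eq_span_singleton_of_mem_of_finrank_eq_one h hvP hv0⟩

theorem indepLines_iff_linearIndepOn {𝒴 : Set (Submodule K V)} {w : Submodule K V → V}
    (hw : ∀ P ∈ 𝒴, P = K ∙ w P) : IndepLines K 𝒴 ↔ LinearIndepOn K w 𝒴 := by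
  constructor
  · rintro ⟨x, hx, hxli⟩
    have hscale (P : 𝒴) : ∃ γ : Kˣ, w P = γ • x P := by
      obtain ⟨γ, hγ⟩ := mem_span_singleton.1 (hw P P.2 ▸ (hx P).1)
      have hγ0 : γ ≠ 0 := by rintro rfl; exact (hx P).2 (by simp [← hγ])
      refine ⟨(Units.mk0 γ hγ0)⁻¹, ?_⟩
      rw [← hγ, Units.smul_def, smul_smul, Units.val_inv_eq_inv_val, Units.val_mk0,
        inv_mul_cancel₀ hγ0, one_smul]
    choose γ hγ using hscale
    rw [LinearIndepOn, show (fun P : 𝒴 => w P) = γ • x from funext hγ]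
    exact hxli.units_smul γ
  · intro hli
    exact ⟨fun P => w P, fun P => ⟨hw P P.2 ▸ mem_span_singleton_self _, hli.ne_zero P.2⟩, hli⟩

theorem IndepLines.image_map (u : V ≃ₗ[K] V) {𝒴 : Set (Submodule K V)} (h : IndepLines K 𝒴) :
    IndepLines K (map (u : V →ₗ[K] V) '' 𝒴) := by
  obtain ⟨x, hx, hxli⟩ := h
  let e := Equiv.Set.image _ 𝒴 (map_injective_of_injective u.injective)
  refine ⟨fun Q => u (x (e.symm Q)), fun Q => ⟨?_, by simpa using (hx _).2⟩,
    (hxli.map' u.toLinearMap u.ker).comp _ e.symm.injective⟩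
  conv_lhs => rw [← e.apply_symm_apply Q]
  exact mem_map_of_mem (hx _).1

theorem IndepLines.ncard_le_finrank [FiniteDimensional K V] {𝒴 : Set (Submodule K V)}
    (h : IndepLines K 𝒴) : 𝒴.ncard ≤ finrank K V := by
  obtain ⟨x, -, hx⟩ := h
  have := hx.finite
  have := Fintype.ofFinite 𝒴
  rw [← Nat.card_coe_set_eq, Nat.card_eq_fintype_card]
  exact hx.fintype_card_le_finrank

theorem indepLines_of_ncard_le_two {𝒴 : Set (Submodule K V)} (hfin : 𝒴.Finite)
    (hline : ∀ P ∈ 𝒴, finrank K P = 1) (h : 𝒴.ncard ≤ 2) : IndepLines K 𝒴 := by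
  choose! w hw0 hw using fun P hP => exists_eq_span_singleton_of_finrank_eq_one (hline P hP)
  rw [indepLines_iff_linearIndepOn hw]
  interval_cases hc : 𝒴.ncard
  · rw [(ncard_eq_zero hfin).1 hc]
    exact linearIndepOn_empty K w
  · obtain ⟨P, rfl⟩ := ncard_eq_one.1 hc
    exact .singleton (hw0 P rfl)
  · obtain ⟨P, Q, hPQ, rfl⟩ := ncard_eq_two.1 hc
    refine (linearIndepOn_pair_iff w hPQ (hw0 P (by simp))).2 fun c hc => hPQ ?_
    have hc0 : c ≠ 0 := by rintro rfl; exact hw0 Q (by simp) (by simp [← hc])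
    rw [hw P (by simp), hw Q (by simp), ← hc, span_singleton_smul_eq (isUnit_iff_ne_zero.2 hc0)]

theorem apply_mem_span_singleton_of_map_eq {u : V →ₗ[K] V} {P Q : Submodule K V} {x y : V}
    (hP : P = K ∙ x) (hQ : Q = K ∙ y) (h : map u P = Q) : u x ∈ K ∙ y := by
  rw [← hQ, ← h, hP]
  exact mem_map_of_mem (mem_span_singleton_self x)

end Lines

section Symmetric

variable {K V : Type*} [DivisionRing K] [AddCommGroup V] [Module K V]

variable (K) in
def EveryPermExtends (𝒳 : Set (Submodule K V)) : Prop :=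
  ∀ s : Equiv.Perm 𝒳, ∃ u : V ≃ₗ[K] V, ∀ P : 𝒳, map (u : V →ₗ[K] V) P = s P

variable (K) in
def GeneralPositionOfRank (m : ℕ) (𝒳 : Set (Submodule K V)) : Prop :=
  (∀ 𝒴 ⊆ 𝒳, 𝒴.ncard = m → IndepLines K 𝒴) ∧ ∀ 𝒴 ⊆ 𝒳, 𝒴.ncard = m + 1 → ¬ IndepLines K 𝒴

variable {𝒳 : Set (Submodule K V)}

theorem EveryPermExtends.indepLines_of_ncard_eq (hX : EveryPermExtends K 𝒳) (hfin : 𝒳.Finite)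
    {𝒴 𝒵 : Set (Submodule K V)} (hY : 𝒴 ⊆ 𝒳) (hZ : 𝒵 ⊆ 𝒳) (hcard : 𝒴.ncard = 𝒵.ncard)
    (h : IndepLines K 𝒴) : IndepLines K 𝒵 := by
  have := (hfin.subset hY).to_subtype
  have := (hfin.subset hZ).to_subtype
  obtain ⟨e⟩ : Nonempty (𝒴 ≃ 𝒵) := Finite.card_eq.1 (by simpa only [Nat.card_coe_set_eq])
  obtain ⟨σ, hσ⟩ := Equiv.Perm.exists_extending_pair (inclusion hY) (inclusion hZ ∘ e)
    (inclusion_injective hY) ((inclusion_injective hZ).comp e.injective)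
  obtain ⟨u, hu⟩ := hX σ
  have himage : map (u : V →ₗ[K] V) '' 𝒴 = 𝒵 := by
    rw [image_eq_range, ← Subtype.range_coe (s := 𝒵), ← e.surjective.range_comp]
    exact congrArg range (funext fun P => (hu (inclusion hY P)).trans (by rw [hσ]; rfl))
  exact himage ▸ h.image_map u

theorem EveryPermExtends.exists_generalPositionOfRank (hX : EveryPermExtends K 𝒳)
    (hfin : 𝒳.Finite) (hline : ∀ P ∈ 𝒳, finrank K P = 1) (hdep : ¬ IndepLines K 𝒳) :
    ∃ m, 2 ≤ m ∧ m < 𝒳.ncard ∧ GeneralPositionOfRank K m 𝒳 := by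
  classical
  have hex : ∃ c, ∃ 𝒴 ⊆ 𝒳, 𝒴.ncard = c ∧ ¬ IndepLines K 𝒴 := ⟨_, 𝒳, subset_rfl, rfl, hdep⟩
  obtain ⟨𝒲, hW, hWc, hWdep⟩ := Nat.find_spec hex
  have hle : Nat.find hex ≤ 𝒳.ncard := Nat.find_min' hex ⟨𝒳, subset_rfl, rfl, hdep⟩
  have h3 : 3 ≤ Nat.find hex := by
    by_contra! hlt
    exact hWdep (indepLines_of_ncard_le_two (hfin.subset hW) (fun P hP => hline P (hW hP))
      (by omega))
  refine ⟨Nat.find hex - 1, by omega, by omega, fun 𝒴 hY hc => ?_, fun 𝒴 hY hc hind => ?_⟩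
  · by_contra h𝒴
    exact Nat.find_min hex (by omega) ⟨𝒴, hY, rfl, h𝒴⟩
  · exact hWdep (hX.indepLines_of_ncard_eq hfin hY hW (by omega) hind)

end Symmetric

section Coordinates

variable {K V ι : Type*} [DecidableEq ι] {s : Finset ι} {e : ι → V}

section Semiring

variable [Semiring K] [AddCommMonoid V] [Module K V]

theorem exists_coeffs_ne_zero {v : V} (hv : v ∈ span K (e '' s))
    (hv' : ∀ j ∈ s, v ∉ span K (e '' ↑(s.erase j))) :
    ∃ c : ι → K, (∀ j ∈ s, c j ≠ 0) ∧ v = ∑ j ∈ s, c j • e j := by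
  obtain ⟨c, rfl⟩ := (mem_span_image_finset_iff_exists_fun' K).1 hv
  refine ⟨c, fun j hj hcj => hv' j hj ?_, rfl⟩
  rw [← Finset.sum_erase s (by rw [hcj, zero_smul])]
  exact (mem_span_image_finset_iff_exists_fun' K).2 ⟨c, rfl⟩

theorem map_sum_smul_of_swap {u : V →ₗ[K] V} {i : ι} (hi : i ∈ s) {a : K} {μ : ι → K}
    (hfix : ∀ k ∈ s, k ≠ i → u (e k) = μ k • e k) (hto : u (e i) = a • ∑ j ∈ s, e j)
    (d : ι → K) :
    u (∑ j ∈ s, d j • e j) = ∑ j ∈ s, (d i * a + if j = i then 0 else d j * μ j) • e j := by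
  simp only [map_sum, map_smul, add_smul, Finset.sum_add_distrib, ite_smul, zero_smul,
    Finset.sum_ite, Finset.sum_const_zero, zero_add, ← Finset.smul_sum, mul_smul]
  rw [← Finset.add_sum_erase s _ hi, hto, Finset.filter_ne' s i]
  refine congrArg _ (Finset.sum_congr rfl fun k hk => ?_)
  rw [hfix k (Finset.mem_of_mem_erase hk) (Finset.ne_of_mem_erase hk)]

end Semiring

section Field

variable [Field K] [AddCommGroup V] [Module K V]

theorem coeff_eq_two_mul_of_swap (he : LinearIndepOn K e s) {u : V →ₗ[K] V}
    (hu : Function.Injective u) {i : ι} (hi : i ∈ s)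
    (hfix : ∀ k ∈ s, k ≠ i → u (e k) ∈ K ∙ e k) (hto : u (e i) ∈ K ∙ ∑ j ∈ s, e j)
    (hfrom : u (∑ j ∈ s, e j) ∈ K ∙ e i)
    {c : ι → K} (hci : c i ≠ 0) (hc : u (∑ j ∈ s, c j • e j) ∈ K ∙ ∑ j ∈ s, c j • e j) :
    ∀ k ∈ s, k ≠ i → c i = 2 * c k := by
  choose! μ hμ using fun k hk hki => mem_span_singleton.1 (hfix k hk hki)
  obtain ⟨a, ha⟩ := mem_span_singleton.1 hto
  obtain ⟨ν, hν⟩ := mem_span_singleton.1 hfrom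
  obtain ⟨ρ, hρ⟩ := mem_span_singleton.1 hc
  have hu_sum := map_sum_smul_of_swap hi (fun k hk hki => (hμ k hk hki).symm) ha.symm
  have ha0 : a ≠ 0 := by
    rintro rfl
    exact he.ne_zero hi (hu (by rw [map_zero, ← ha, zero_smul]))
  have hcoeff := linearIndepOn_finset_iffₛ.1 he
  have hμ_eq (k) (hk : k ∈ s) (hki : k ≠ i) : μ k = -a := by
    have h := hcoeff _ (fun j => if j = i then ν else 0) (by
      rw [← hu_sum fun _ => 1]
      simpa [ite_smul, hi] using hν.symm) k hk
    simp only [hki, if_false] at h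
    linear_combination h
  have hz := hcoeff _ (fun j => ρ * c j) (by
    rw [← hu_sum c, ← hρ, Finset.smul_sum]
    simp_rw [smul_smul])
  have hρa : ρ = a := by
    have h := hz i hi
    simp only [if_pos, add_zero] at h
    exact mul_right_cancel₀ hci (by linear_combination -h)
  intro k hk hki
  have h := hz k hk
  simp only [hki, if_false, hμ_eq k hk hki, hρa] at h
  exact mul_left_cancel₀ ha0 (by linear_combination h)

theorem three_eq_zero_and_eq_pair_of_coeff_eq_two_mul {c : ι → K}
    (hc : ∀ j ∈ s, c j ≠ 0) (hrel : ∀ i ∈ s, ∀ k ∈ s, k ≠ i → c i = 2 * c k) {i k : ι}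
    (hi : i ∈ s) (hk : k ∈ s) (hik : i ≠ k) : (3 : K) = 0 ∧ s = {i, k} := by
  have h3 : (3 : K) = 0 := by
    have h : (3 : K) * c i = 0 := by
      linear_combination -hrel i hi k hk hik.symm - 2 * hrel k hk i hi hik
    exact (mul_eq_zero.1 h).resolve_right (hc i hi)
  refine ⟨h3, Finset.Subset.antisymm (fun j hj => ?_) (Finset.insert_subset hi (by simpa))⟩
  by_contra hjik
  simp only [Finset.mem_insert, Finset.mem_singleton, not_or] at hjik
  have h2 : (2 : K) * c j = 0 := by
    linear_combination hrel i hi j hj hjik.1 - hrel i hi k hk hik.symm - 2 * hrel k hk j hj hjik.2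
  exact one_ne_zero (by linear_combination h3 - (mul_eq_zero.1 h2).resolve_right (hc j hj))

end Field

end Coordinates

section Harmonic

variable {K V : Type*} [Field K] [AddCommGroup V] [Module K V] {𝒳 : Set (Submodule K V)}
  {w : Submodule K V → V} {m : ℕ}

theorem GeneralPositionOfRank.exists_coeffs (hgp : GeneralPositionOfRank K m 𝒳)
    (hw : ∀ P ∈ 𝒳, P = K ∙ w P) {𝒴 : Finset (Submodule K V)} (hY : ↑𝒴 ⊆ 𝒳) (hYm : 𝒴.card = m)
    {z : Submodule K V} (hz : z ∈ 𝒳) (hzY : z ∉ 𝒴) :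
    ∃ c : Submodule K V → K, (∀ P ∈ 𝒴, c P ≠ 0) ∧ w z = ∑ P ∈ 𝒴, c P • w P := by
  classical
  have hindep {𝒵} (h𝒵 : 𝒵 ⊆ 𝒳) (hcard : 𝒵.ncard = m) : LinearIndepOn K w 𝒵 :=
    (indepLines_iff_linearIndepOn fun P hP => hw P (h𝒵 hP)).1 (hgp.1 𝒵 h𝒵 hcard)
  apply exists_coeffs_ne_zero
  · by_contra hspan
    have hsub : insert z ↑𝒴 ⊆ 𝒳 := insert_subset hz hY
    refine hgp.2 _ hsub (by rw [ncard_insert_of_notMem hzY, ncard_coe_finset, hYm]) ?_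
    rw [indepLines_iff_linearIndepOn fun P hP => hw P (hsub hP), linearIndepOn_insert hzY]
    exact ⟨hindep hY (by rwa [ncard_coe_finset]), hspan⟩
  · intro P hP
    have hzP : z ∉ ↑(𝒴.erase P) := fun h => hzY (Finset.mem_of_mem_erase h)
    have hsub : insert z ↑(𝒴.erase P) ⊆ 𝒳 :=
      insert_subset hz ((Finset.coe_subset.2 (Finset.erase_subset P 𝒴)).trans hY)
    have hpos := Finset.card_pos.2 ⟨P, hP⟩
    refine ((linearIndepOn_insert hzP).1 (hindep hsub ?_)).2
    rw [ncard_insert_of_notMem hzP, ncard_coe_finset, Finset.card_erase_of_mem hP]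
    omega

theorem GeneralPositionOfRank.exists_frame (hgp : GeneralPositionOfRank K m 𝒳)
    (hline : ∀ P ∈ 𝒳, finrank K P = 1) {𝒴 : Finset (Submodule K V)} (hY : ↑𝒴 ⊆ 𝒳)
    (hYm : 𝒴.card = m) {p : Submodule K V} (hp : p ∈ 𝒳) (hpY : p ∉ 𝒴) :
    ∃ w : Submodule K V → V, (∀ P ∈ 𝒳, P = K ∙ w P) ∧ LinearIndepOn K w 𝒴 ∧
      w p = ∑ P ∈ 𝒴, w P := by
  classical
  choose! w₀ _ hw₀ using fun P hP => exists_eq_span_singleton_of_finrank_eq_one (hline P hP)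
  obtain ⟨a, ha, hwp⟩ := hgp.exists_coeffs hw₀ hY hYm hp hpY
  let w P := if P ∈ 𝒴 then a P • w₀ P else w₀ P
  have hw (P) (hP : P ∈ 𝒳) : P = K ∙ w P := by
    by_cases h : P ∈ 𝒴
    · rw [show w P = a P • w₀ P from if_pos h, span_singleton_smul_eq (ha P h).isUnit]
      exact hw₀ P hP
    · rw [show w P = w₀ P from if_neg h]
      exact hw₀ P hP
  refine ⟨w, hw, (indepLines_iff_linearIndepOn fun P hP => hw P (hY hP)).1
    (hgp.1 _ hY (by rwa [ncard_coe_finset])), ?_⟩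
  rw [show w p = w₀ p from if_neg hpY, hwp]
  exact Finset.sum_congr rfl fun P hP => (if_pos hP).symm

theorem EveryPermExtends.coeff_eq_two_mul (hX : EveryPermExtends K 𝒳)
    (hw : ∀ P ∈ 𝒳, P = K ∙ w P)
    {𝒴 : Finset (Submodule K V)} (hY : ↑𝒴 ⊆ 𝒳) (hind : LinearIndepOn K w 𝒴)
    {p : Submodule K V} (hp : p ∈ 𝒳) (hpY : p ∉ 𝒴) (hwp : w p = ∑ P ∈ 𝒴, w P)
    {z : Submodule K V} (hz : z ∈ 𝒳) (hzY : z ∉ 𝒴) (hzp : z ≠ p)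
    {c : Submodule K V → K} (hc : ∀ P ∈ 𝒴, c P ≠ 0) (hwz : w z = ∑ P ∈ 𝒴, c P • w P)
    {i : Submodule K V} (hi : i ∈ 𝒴) : ∀ k ∈ 𝒴, k ≠ i → c i = 2 * c k := by
  classical
  obtain ⟨u, hu⟩ := hX (Equiv.swap (⟨i, hY hi⟩ : 𝒳) ⟨p, hp⟩)
  have hmaps {P Q : Submodule K V} (hP : P ∈ 𝒳) (hQ : Q ∈ 𝒳)
      (h : Equiv.swap (⟨i, hY hi⟩ : 𝒳) ⟨p, hp⟩ ⟨P, hP⟩ = ⟨Q, hQ⟩) : u (w P) ∈ K ∙ w Q :=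
    apply_mem_span_singleton_of_map_eq (hw P hP) (hw Q hQ) ((hu ⟨P, hP⟩).trans (by rw [h]))
  have hfixed {P : Submodule K V} (hP : P ∈ 𝒳) (hPi : P ≠ i) (hPp : P ≠ p) : u (w P) ∈ K ∙ w P :=
    hmaps hP hP (Equiv.swap_apply_of_ne_of_ne (by simpa using hPi) (by simpa using hPp))
  refine coeff_eq_two_mul_of_swap hind u.injective hi
    (fun k hk hki => hfixed (hY hk) hki (ne_of_mem_of_not_mem hk hpY))
    (hwp ▸ hmaps (hY hi) hp (Equiv.swap_apply_left _ _))
    (hwp ▸ hmaps hp (hY hi) (Equiv.swap_apply_right _ _))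
    (hc i hi) (hwz ▸ hfixed hz (ne_of_mem_of_not_mem hi hzY).symm hzp)

theorem EveryPermExtends.ringChar_eq_three_and_harmonic (hX : EveryPermExtends K 𝒳)
    (hfin : 𝒳.Finite) (hline : ∀ P ∈ 𝒳, finrank K P = 1) (hm : 2 ≤ m) (hXm : m + 1 < 𝒳.ncard)
    (hgp : GeneralPositionOfRank K m 𝒳) : ringChar K = 3 ∧ Harmonic K 𝒳 := by
  classical
  obtain ⟨𝒴, hY𝒳, hYm⟩ := Finset.exists_subset_card_eq (s := hfin.toFinset) (n := m)
    (by rw [← ncard_eq_toFinset_card _ hfin]; omega)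
  have hY : ↑𝒴 ⊆ 𝒳 := fun P hP => hfin.mem_toFinset.1 (hY𝒳 hP)
  obtain ⟨p, q, ⟨hp, hpY⟩, ⟨hq, hqY⟩, hpq⟩ := (one_lt_ncard_iff (hfin.subset sdiff_subset)).1
    (by rw [ncard_sdiff hY, ncard_coe_finset, hYm]; omega)
  obtain ⟨w, hw, hind, hwp⟩ := hgp.exists_frame hline hY hYm hp hpY
  have hrel {z} (hz : z ∈ 𝒳) (hzY : z ∉ 𝒴) (hzp : z ≠ p) : ∃ c : Submodule K V → K,
      (∀ P ∈ 𝒴, c P ≠ 0) ∧ w z = ∑ P ∈ 𝒴, c P • w P ∧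
        ∀ i ∈ 𝒴, ∀ k ∈ 𝒴, k ≠ i → c i = 2 * c k := by
    obtain ⟨c, hc, hwz⟩ := hgp.exists_coeffs hw hY hYm hz hzY
    exact ⟨c, hc, hwz, fun i hi => hX.coeff_eq_two_mul hw hY hind hp hpY hwp hz hzY hzp hc hwz hi⟩
  obtain ⟨i, hi, k, hk, hik⟩ := Finset.one_lt_card.1 (by omega : 1 < 𝒴.card)
  obtain ⟨h3, hYik⟩ : (3 : K) = 0 ∧ 𝒴 = {i, k} := by
    obtain ⟨c, hc, -, hcrel⟩ := hrel hq hqY hpq.symm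
    exact three_eq_zero_and_eq_pair_of_coeff_eq_two_mul hc hcrel hi hk hik
  have hsub (z) (hz : z ∈ 𝒳) (hzY : z ∉ 𝒴) (hzp : z ≠ p) : z = K ∙ (w i - w k) := by
    obtain ⟨c, hc, hwz, hcrel⟩ := hrel hz hzY hzp
    have : w z = (-c k) • (w i - w k) := by
      rw [hwz, hYik, Finset.sum_pair hik, hcrel i hi k hk hik.symm]
      linear_combination (norm := module) h3 • (c k • w i)
    rw [hw z hz, this, span_singleton_smul_eq (neg_ne_zero.2 (hc k hk)).isUnit]
  have hadd : p = K ∙ (w i + w k) := by rw [hw p hp, hwp, hYik, Finset.sum_pair hik]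
  refine ⟨ringChar.eq_iff.2 ((CharP.charP_iff_prime_eq_zero Nat.prime_three).2
    (by exact_mod_cast h3)), w i, w k, ?_, ?_⟩
  · rw [LinearIndependent.pair_iff' (hind.ne_zero hi)]
    refine (linearIndepOn_pair_iff w hik (hind.ne_zero hi)).1 ?_
    simpa [hYik] using hind
  · rw [← hw i (hY hi), ← hw k (hY hk), ← hadd, ← hsub q hq hqY hpq.symm]
    ext z
    simp only [mem_insert_iff, mem_singleton_iff]
    refine ⟨fun hz => ?_, by rintro (rfl | rfl | rfl | rfl); exacts [hY hi, hY hk, hp, hq]⟩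
    by_cases hzY : z ∈ 𝒴
    · rw [hYik, Finset.mem_insert, Finset.mem_singleton] at hzY
      tauto
    by_cases hzp : z = p
    · exact Or.inr (Or.inr (Or.inl hzp))
    · exact Or.inr (Or.inr (Or.inr ((hsub z hz hzY hzp).trans (hsub q hq hqY hpq.symm).symm)))

end Harmonic

theorem stmt9_general {K V : Type*} [Field K] [AddCommGroup V] [Module K V]
    [FiniteDimensional K V]
    (𝒳 : Set (Submodule K V)) (hfin : 𝒳.Finite)
    (hline : ∀ P ∈ 𝒳, Module.finrank K P = 1)
    (hext : ∀ s : Equiv.Perm 𝒳, ∃ u : V ≃ₗ[K] V, ∀ P : 𝒳,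
      Submodule.map (u : V →ₗ[K] V) (P : Submodule K V) = (s P : Submodule K V)) :
    IndepLines K 𝒳 ∨
      (∃ m : ℕ, 2 ≤ m ∧ m ≤ Module.finrank K V ∧ IsSimplex K m 𝒳) ∨
      (ringChar K = 3 ∧ Harmonic K 𝒳) := by
  by_cases hI : IndepLines K 𝒳
  · exact Or.inl hI
  obtain ⟨m, hm, hmX, hgp⟩ := EveryPermExtends.exists_generalPositionOfRank hext hfin hline hI
  rcases (Nat.succ_le_of_lt hmX).eq_or_lt with hXm | hXm
  · obtain ⟨𝒴, hY, hYm⟩ := exists_subset_card_eq hmX.le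
    exact Or.inr <| Or.inl ⟨m, hm, hYm ▸ IndepLines.ncard_le_finrank (hgp.1 𝒴 hY hYm),
      hfin, hXm.symm, hline, hI, hgp.1⟩
  · exact Or.inr <| Or.inr <|
      EveryPermExtends.ringChar_eq_three_and_harmonic hext hfin hline hm hXm hgp

/-- Theorem 2: If every permutation of a finite subset `𝒳` of `P(V)`
(`|𝒳| ≥ 2`) extends to an element of `PGL(V)`, then `𝒳` is independent, or an
`m`-simplex for some `2 ≤ m ≤ dim V`, or `char K = 3` and `𝒳` is harmonic. -/
theorem stmt9 {K V : Type*} [Field K] [AddCommGroup V] [Module K V]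
    [FiniteDimensional K V] (hdim : 2 ≤ Module.finrank K V)
    (𝒳 : Set (Submodule K V)) (hfin : 𝒳.Finite) (h2 : 2 ≤ 𝒳.ncard)
    (hline : ∀ P ∈ 𝒳, Module.finrank K P = 1)
    (hext : ∀ s : Equiv.Perm 𝒳, ∃ u : V ≃ₗ[K] V, ∀ P : 𝒳,
      Submodule.map (u : V →ₗ[K] V) (P : Submodule K V) = (s P : Submodule K V)) :
    IndepLines K 𝒳 ∨
      (∃ m : ℕ, 2 ≤ m ∧ m ≤ Module.finrank K V ∧ IsSimplex K m 𝒳) ∨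
      (ringChar K = 3 ∧ Harmonic K 𝒳) :=
  stmt9_general 𝒳 hfin hline hext
end

section
/- Let V be a vector space over a field of characteristic 3 and x, y linearly independent. Every 3-element subset of the harmonic set {⟨x⟩, ⟨y⟩, ⟨x+y⟩, ⟨x−y⟩} is a 2-simplex, i.e., any two of its elements are independent but the three together are not. -/
/-- Two distinct lines, each the span of a nonzero vector, are independent. -/
lemma indep_pair {K V : Type*} [Field K] [AddCommGroup V] [Module K V]
    {u v : V} (hu : u ≠ 0) (hv : v ≠ 0)
    (hne : Submodule.span K {u} ≠ Submodule.span K {v}) :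
    IndepLines K {Submodule.span K {u}, Submodule.span K {v}} := by
  classical
  set P := Submodule.span K {u}
  set Q := Submodule.span K {v}
  have huv : LinearIndependent K ![u, v] := by
    rw [LinearIndependent.pair_iff]
    intro s t hst
    by_cases ht : t = 0
    · subst ht
      simp only [smul_zero, zero_smul, add_zero] at hst
      rcases smul_eq_zero.1 hst with h | h
      · exact ⟨h, rfl⟩
      · exact absurd h hu
    · exfalso
      apply hne
      have hv' : v = (-s / t) • u := by
        have h1 : t • v = (-s) • u := by linear_combination (norm := module) hst
        calc v = t⁻¹ • (t • v) := by rw [smul_smul, inv_mul_cancel₀ ht, one_smul]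
          _ = t⁻¹ • ((-s) • u) := by rw [h1]
          _ = (-s / t) • u := by rw [smul_smul, div_eq_inv_mul]
      have hPQ : Q ≤ P := by
        rw [Submodule.span_le, Set.singleton_subset_iff, hv']
        exact Submodule.smul_mem _ _ (Submodule.mem_span_singleton_self u)
      have hst' : (-s / t) ≠ 0 := by
        intro h
        rw [h, zero_smul] at hv'
        exact hv hv'
      have hQP : P ≤ Q := by
        rw [Submodule.span_le, Set.singleton_subset_iff]
        have : u = (-s / t)⁻¹ • v := by rw [hv', smul_smul, inv_mul_cancel₀ hst', one_smul]
        rw [this]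
        exact Submodule.smul_mem _ _ (Submodule.mem_span_singleton_self v)
      exact le_antisymm hQP hPQ
  refine ⟨fun r => if (r : Submodule K V) = P then u else v, ?_, ?_⟩
  · rintro ⟨r, hr⟩
    show (if r = P then u else v) ∈ r ∧ (if r = P then u else v) ≠ 0
    by_cases h : r = P
    · rw [if_pos h, h]
      exact ⟨Submodule.mem_span_singleton_self u, hu⟩
    · rcases hr with h' | h'
      · exact absurd h' h
      · rw [if_neg h, Set.mem_singleton_iff.1 h']
        exact ⟨Submodule.mem_span_singleton_self v, hv⟩
  · have : (fun r : ({P, Q} : Set (Submodule K V)) =>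
        if (r : Submodule K V) = P then u else v) =
        ![u, v] ∘ (fun r : ({P, Q} : Set (Submodule K V)) =>
          if (r : Submodule K V) = P then (0 : Fin 2) else 1) := by
      funext r
      by_cases h : (r : Submodule K V) = P <;> simp [h]
    rw [this]
    apply huv.comp
    rintro ⟨r, hr⟩ ⟨s, hs⟩ h
    dsimp only at h
    have hr' : r = P ∨ r = Q := by simpa using hr
    have hs' : s = P ∨ s = Q := by simpa using hs
    rcases hr' with hr' | hr' <;> rcases hs' with hs' | hs'
    · exact Subtype.ext (hr'.trans hs'.symm)
    · exfalso
      by_cases hqp : s = P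
      · exact hne (hqp ▸ hs')
      · rw [if_pos hr', if_neg hqp] at h; exact absurd h (by decide)
    · exfalso
      by_cases hqp : r = P
      · exact hne (hqp ▸ hr')
      · rw [if_neg hqp, if_pos hs'] at h; exact absurd h (by decide)
    · exact Subtype.ext (hr'.trans hs'.symm)

/-- Over a field of characteristic `3`, every `3`-element subset of the
harmonic set `{⟨x⟩, ⟨y⟩, ⟨x+y⟩, ⟨x−y⟩}` is a `2`-simplex. -/
theorem stmt14 {K V : Type*} [Field K] [AddCommGroup V] [Module K V]
    [FiniteDimensional K V] (hdim : 2 ≤ Module.finrank K V)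
    (hchar : ringChar K = 3)
    (x y : V) (hxy : LinearIndependent K ![x, y])
    (𝒳 : Set (Submodule K V))
    (h𝒳 : 𝒳 = {Submodule.span K {x}, Submodule.span K {y},
      Submodule.span K {x + y}, Submodule.span K {x - y}}) :
    ∀ 𝒴 ⊆ 𝒳, 𝒴.ncard = 3 → IsSimplex K 2 𝒴 := by
  have hpair := LinearIndependent.pair_iff.1 hxy
  have hx0 : x ≠ 0 := fun h => one_ne_zero ((hpair 1 0 (by simp [h])).1)
  have hy0 : y ≠ 0 := fun h => one_ne_zero ((hpair 0 1 (by simp [h])).2)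
  have hxpy : x + y ≠ 0 := fun h => one_ne_zero ((hpair 1 1 (by simpa using h)).1)
  have hxmy : x - y ≠ 0 := fun h => one_ne_zero
    ((hpair 1 (-1) (by simpa [sub_eq_add_neg] using h)).1)
  -- every element of 𝒳 is the span of a nonzero vector lying in span {x, y}
  have hform : ∀ P ∈ 𝒳, ∃ u : V, u ≠ 0 ∧ u ∈ Submodule.span K {x, y} ∧
      P = Submodule.span K {u} := by
    intro P hP
    rw [h𝒳] at hP
    have hxm : x ∈ Submodule.span K {x, y} :=
      Submodule.subset_span (Set.mem_insert _ _)
    have hym : y ∈ Submodule.span K {x, y} :=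
      Submodule.subset_span (Set.mem_insert_of_mem _ rfl)
    rcases hP with h | h | h | h
    · exact ⟨x, hx0, hxm, h⟩
    · exact ⟨y, hy0, hym, h⟩
    · exact ⟨x + y, hxpy, Submodule.add_mem _ hxm hym, h⟩
    · exact ⟨x - y, hxmy, Submodule.sub_mem _ hxm hym, h⟩
  have h𝒳fin : 𝒳.Finite := by
    rw [h𝒳]; exact (Set.finite_singleton _).insert _ |>.insert _ |>.insert _
  intro 𝒴 h𝒴sub h𝒴card
  have h𝒴fin : 𝒴.Finite := h𝒳fin.subset h𝒴sub
  refine ⟨h𝒴fin, h𝒴card, ?_, ?_, ?_⟩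
  · intro P hP
    obtain ⟨u, hu0, -, hPu⟩ := hform P (h𝒴sub hP)
    rw [hPu]
    exact finrank_span_singleton hu0
  · -- not independent: three vectors in a 2-dim subspace
    rintro ⟨f, hf, hfi⟩
    set W := Submodule.span K {x, y}
    have hrange : Set.range ![x, y] = {x, y} := by
      ext v
      simp [Fin.exists_fin_two, or_comm]
    have hW : Module.finrank K W = 2 := by
      have := finrank_span_eq_card hxy
      rw [hrange] at this
      simpa using this
    have hmem : ∀ P : 𝒴, f P ∈ W := by
      rintro ⟨P, hP⟩
      obtain ⟨u, -, huW, hPu⟩ := hform P (h𝒴sub hP)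
      have hle : P ≤ W := hPu ▸ (Submodule.span_le.2 (Set.singleton_subset_iff.2 huW))
      exact hle (hf ⟨P, hP⟩).1
    set g : 𝒴 → W := fun P => ⟨f P, hmem P⟩ with hg
    have hgi : LinearIndependent K g := by
      apply LinearIndependent.of_comp W.subtype
      exact hfi
    haveI : Fintype ↥𝒴 := h𝒴fin.fintype
    have hcard : Fintype.card ↥𝒴 = 3 := by
      rw [← Nat.card_eq_fintype_card, Nat.card_coe_set_eq, h𝒴card]
    have := hgi.fintype_card_le_finrank
    rw [hcard, hW] at this
    omega
  · intro 𝒵 h𝒵 h𝒵card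
    obtain ⟨P, Q, hPQ, rfl⟩ := Set.ncard_eq_two.1 h𝒵card
    obtain ⟨u, hu0, -, hPu⟩ := hform P (h𝒴sub (h𝒵 (Set.mem_insert _ _)))
    obtain ⟨v, hv0, -, hQv⟩ := hform Q (h𝒴sub (h𝒵 (Set.mem_insert_of_mem _ rfl)))
    rw [hPu, hQv]
    exact indep_pair hu0 hv0 (by rw [← hPu, ← hQv]; exact hPQ)
end

section
/- Let V be a finite-dimensional vector space over a division ring, X = {x₁,…,x_k} ⊂ V with x₁,…,x_m linearly independent (m < k) and every x_p (p > m) in the span of x₁,…,x_m. If every transposition of two elements of {x₁,…,x_m} extends to a linear automorphism of V fixing all other elements of X, then for each p > m there is a nonzero scalar a with x_p = a(x₁+⋯+x_m). -/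
/-- Let `X = {x 1, …, x k}` with `x 1, …, x m` linearly independent and
every `x p` (`p > m`) in their span.  If every transposition of two of
`x 1, …, x m` extends to a linear automorphism of `V` fixing all other elements of
`X`, then every `x p` (`p > m`) equals `a • (x 1 + ⋯ + x m)` for a nonzero scalar
`a`. -/
theorem stmt16 {K V : Type*} [DivisionRing K] [AddCommGroup V] [Module K V]
    [FiniteDimensional K V] (hdim : 2 ≤ Module.finrank K V)
    {m k : ℕ} (hmk : m < k) (x : Fin k → V)
    (hinj : Function.Injective x) (h0 : ∀ p, x p ≠ 0)
    (hindep : LinearIndependent K (x ∘ Fin.castLE hmk.le))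
    (hspan : ∀ p : Fin k, m ≤ (p : ℕ) →
      x p ∈ Submodule.span K (Set.range (x ∘ Fin.castLE hmk.le)))
    (hext : ∀ i j : Fin k, (i : ℕ) < m → (j : ℕ) < m →
      ∃ u : V ≃ₗ[K] V, u (x i) = x j ∧ u (x j) = x i ∧
        ∀ l : Fin k, l ≠ i → l ≠ j → u (x l) = x l) :
    ∀ p : Fin k, m ≤ (p : ℕ) →
      ∃ a : K, a ≠ 0 ∧ x p = a • ∑ i : Fin m, x (Fin.castLE hmk.le i) := by
  intro p hp
  set y : Fin m → V := x ∘ Fin.castLE hmk.le with hy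
  obtain ⟨c, hc⟩ := (Submodule.mem_span_range_iff_exists_fun K).mp (hspan p hp)
  rcases Nat.eq_zero_or_pos m with hm | hm
  · exact absurd (by subst hm; simpa using hc.symm) (h0 p)
  have key : ∀ i j : Fin m, c i = c j := by
    intro i j
    rcases eq_or_ne i j with rfl | hij
    · rfl
    obtain ⟨u, hui, huj, hul⟩ :=
      hext (Fin.castLE hmk.le i) (Fin.castLE hmk.le j) i.isLt j.isLt
    have hpfix : u (x p) = x p := by
      refine hul p ?_ ?_ <;>
        · intro h
          have := congrArg Fin.val h
          simp [Fin.val_eq_val] at this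
          omega
    have hswap : ∀ l : Fin m, u (y l) = y (Equiv.swap i j l) := by
      intro l
      rcases eq_or_ne l i with rfl | hli
      · simpa [Equiv.swap_apply_left, hy] using hui
      rcases eq_or_ne l j with rfl | hlj
      · simpa [Equiv.swap_apply_right, hy] using huj
      · rw [Equiv.swap_apply_of_ne_of_ne hli hlj]
        exact hul _ (fun h => hli (Fin.castLE_injective _ h))
          (fun h => hlj (Fin.castLE_injective _ h))
    have heq : ∑ l, c l • y (Equiv.swap i j l) = ∑ l, c l • y l := by
      calc ∑ l, c l • y (Equiv.swap i j l) = u (x p) := by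
            rw [← hc, map_sum]
            exact (Finset.sum_congr rfl fun l _ => by rw [map_smul, hswap]).symm
        _ = x p := hpfix
        _ = ∑ l, c l • y l := hc.symm
    have heq2 : ∑ l, c (Equiv.swap i j l) • y l = ∑ l, c l • y l := by
      rw [← heq]
      exact Fintype.sum_equiv (Equiv.swap i j) _ _ (fun l => by simp)
    have hz := Fintype.linearIndependent_iff.mp hindep
      (fun l => c (Equiv.swap i j l) - c l) (by
        simp only [sub_smul, Finset.sum_sub_distrib, heq2, sub_self]) i
    have : c (Equiv.swap i j i) = c i := by
      have := sub_eq_zero.mp hz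
      simpa using this
    simpa [Equiv.swap_apply_left] using this.symm
  refine ⟨c ⟨0, hm⟩, ?_, ?_⟩
  · intro ha
    apply h0 p
    rw [← hc]
    refine Finset.sum_eq_zero fun l _ => ?_
    rw [key l ⟨0, hm⟩, ha, zero_smul]
  · rw [← hc, Finset.smul_sum]
    exact Finset.sum_congr rfl fun l _ => by rw [key l ⟨0, hm⟩]; rfl
end

section
/- Let V be a vector space over a division ring with linearly independent vectors x₁,…,x_m, m ≥ 1, and a a nonzero scalar with x_p = a(x₁+⋯+x_m). If there is a linear automorphism of V swapping x₁ and x_p and fixing x₂,…,x_m, then a = −1. -/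
/-- If `x 1, …, x m` are linearly independent, `a ≠ 0`,
`x_p = a • (x 1 + ⋯ + x m)` with `x_p ≠ x 1`, and some linear automorphism of `V`
swaps `x 1` and `x_p` while fixing `x 2, …, x m`, then `a = -1`. -/
theorem stmt17 {K V : Type*} [DivisionRing K] [AddCommGroup V] [Module K V]
    [FiniteDimensional K V] (hdim : 2 ≤ Module.finrank K V)
    {m : ℕ} (hm : 1 ≤ m) (x : Fin m → V) (hx : LinearIndependent K x)
    (a : K) (ha : a ≠ 0) (xp : V) (hxp : xp = a • ∑ i, x i)
    (hne : xp ≠ x ⟨0, hm⟩)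
    (v : V ≃ₗ[K] V) (hv1 : v (x ⟨0, hm⟩) = xp) (hvp : v xp = x ⟨0, hm⟩)
    (hvfix : ∀ i : Fin m, i ≠ ⟨0, hm⟩ → v (x i) = x i) :
    a = -1 := by
  set p0 : Fin m := ⟨0, hm⟩ with hp0
  set S : V := ∑ i, x i with hS
  have hvS : v S = S + xp - x p0 := by
    have h0 : v S = ∑ i, v (x i) := map_sum v x Finset.univ
    rw [h0]
    have h1 : ∀ i ∈ Finset.univ, v (x i)
        = x i + (if i = p0 then xp - x p0 else 0) := by
      intro i _
      by_cases h : i = p0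
      · subst h; simp [hv1]
      · simp [h, hvfix i h]
    rw [Finset.sum_congr rfl h1, Finset.sum_add_distrib, Finset.sum_ite_eq']
    simp only [Finset.mem_univ, if_true, ← hS]
    rw [add_sub_assoc]
  have key : (a * a) • S + a • S = x p0 + a • x p0 := by
    have h1 : v xp = a • v S := by rw [hxp, map_smul]
    rw [hvp, hvS, smul_sub, smul_add, hxp, smul_smul] at h1
    rw [eq_sub_iff_add_eq] at h1
    rw [add_comm]; exact h1.symm
  set g : Fin m → K := fun i => (a * a + a) - (if i = p0 then (1 + a) else 0)
    with hg
  have hsum : ∑ i, g i • x i = 0 := by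
    have hterm : ∀ i ∈ Finset.univ, g i • x i
        = ((a * a) • x i + a • x i) - (if i = p0 then x p0 + a • x p0 else 0) := by
      intro i _
      by_cases h : i = p0
      · subst h
        simp only [hg, if_true, sub_smul, add_smul, one_smul]
      · simp [hg, h, add_smul]
    rw [Finset.sum_congr rfl hterm, Finset.sum_sub_distrib, Finset.sum_add_distrib,
      ← Finset.smul_sum, ← Finset.smul_sum, Finset.sum_ite_eq']
    simp only [Finset.mem_univ, if_true, ← hS, key, sub_self]
  have hzero : ∀ i, g i = 0 := Fintype.linearIndependent_iff.mp hx g hsum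
  rcases Nat.lt_or_ge 1 m with h2 | h2
  · have hone := hzero ⟨1, h2⟩
    have hne01 : (⟨1, h2⟩ : Fin m) ≠ p0 := by simp [hp0, Fin.ext_iff]
    simp only [hg, hne01, if_neg, sub_zero, if_false] at hone
    have hmul : a * (a + 1) = 0 := by rw [mul_add, mul_one]; exact hone
    rcases mul_eq_zero.mp hmul with h | h
    · exact absurd h ha
    · exact eq_neg_of_add_eq_zero_left h
  · -- m = 1
    have hm1 : m = 1 := le_antisymm h2 hm
    have h0 := hzero p0
    simp only [hg, if_true] at h0
    have haa : a * a = 1 := by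
      have h0' : a * a + a - (1 + a) = a * a - 1 := by abel
      rw [h0'] at h0
      exact sub_eq_zero.mp h0
    have hSx : S = x p0 := by
      subst hm1
      rw [hS, Fin.sum_univ_one]
      exact congrArg x (Fin.ext rfl)
    have ha1 : a ≠ 1 := by
      intro h
      exact hne (by rw [hxp, hSx, h, one_smul])
    have hfac : (a - 1) * (a + 1) = 0 := by
      have : (a - 1) * (a + 1) = a * a - 1 := by noncomm_ring
      rw [this, haa, sub_self]
    rcases mul_eq_zero.mp hfac with h | h
    · exact absurd (sub_eq_zero.mp h) ha1
    · exact eq_neg_of_add_eq_zero_left h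
end

section
/- Let V be an n-dimensional vector space over a field R, n ≥ 2, and 𝒳 = {P₁,…,P_{n+1}} an n-simplex in P(V). Write X = {x₁,…,x_n, −(x₁+⋯+x_n)} where xᵢ ∈ Pᵢ are linearly independent with P_{n+1} = ⟨x₁+⋯+x_n⟩. Then the group G(𝒳) ≤ PGL(V) of unique extensions of permutations of 𝒳 equals π(G(X)), where G(X) ≤ GL(V) is the group of unique extensions of permutations of X and π : GL(V) → PGL(V) is the natural projection. -/
/-- Let `𝒳 = {⟨x 1⟩, …, ⟨x n⟩, ⟨x 1 + ⋯ + x n⟩}` be an `n`-simplex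
built from a basis `x 1, …, x n` of `V`, and
`X = {x 1, …, x n, -(x 1 + ⋯ + x n)}`.  Then `G(𝒳) = π(G(X))`: an element of
`PGL(V)` extends a permutation of `𝒳` (i.e. stabilizes `𝒳`) iff it is induced by a
linear automorphism extending a permutation of `X` (i.e. stabilizing `X`). -/
theorem stmt18 {K V : Type*} [Field K] [AddCommGroup V] [Module K V]
    [FiniteDimensional K V] {n : ℕ} (hn : Module.finrank K V = n) (h2 : 2 ≤ n)
    (x : Fin n → V) (hx : LinearIndependent K x)
    (hspan : Submodule.span K (Set.range x) = ⊤)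
    (X : Set V) (hX : X = Set.range x ∪ {-(∑ i, x i)})
    (𝒳 : Set (Submodule K V))
    (h𝒳 : 𝒳 = Set.range (fun i => Submodule.span K {x i}) ∪
      {Submodule.span K {∑ i, x i}}) :
    ∀ u : V ≃ₗ[K] V,
      (∀ P ∈ 𝒳, Submodule.map (u : V →ₗ[K] V) P ∈ 𝒳) ↔
        ∃ v : V ≃ₗ[K] V, (∀ p ∈ X, v p ∈ X) ∧
          ∀ L : Submodule K V, Module.finrank K L = 1 →
            Submodule.map (u : V →ₗ[K] V) L = Submodule.map (v : V →ₗ[K] V) L := by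
  classical
  intro u
  set y : Fin (n + 1) → V := Fin.snoc x (-(∑ i, x i)) with hy
  have hylast : y (Fin.last n) = -(∑ i, x i) := Fin.snoc_last _ _
  have hycast : ∀ i : Fin n, y i.castSucc = x i := fun i => Fin.snoc_castSucc _ _ _
  -- two distinct elements exist
  have exists_ne2 : ∀ i j : Fin (n + 1), ∃ k, k ≠ i ∧ k ≠ j := by
    intro i j
    by_contra h
    push_neg at h
    have hsub : (Finset.univ : Finset (Fin (n + 1))) ⊆ {i, j} := by
      intro k _
      rcases eq_or_ne k i with hk | hk
      · simp [hk]
      · simp [h k hk]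
    have hcard := Finset.card_le_card hsub
    rw [Finset.card_univ, Fintype.card_fin] at hcard
    have := Finset.card_insert_le i ({j} : Finset (Fin (n + 1)))
    simp at this
    omega
  have spanneg : ∀ a : V, Submodule.span K {-a} = Submodule.span K {a} := by
    intro a
    rw [← Set.neg_singleton, Submodule.span_neg]
  have hrangey : Set.range y = X := by
    rw [hX]
    ext z
    constructor
    · rintro ⟨j, rfl⟩
      refine Fin.lastCases ?_ ?_ j
      · rw [hylast]; exact Or.inr rfl
      · intro i; rw [hycast]; exact Or.inl ⟨i, rfl⟩
    · rintro (⟨i, rfl⟩ | hz)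
      · exact ⟨i.castSucc, hycast i⟩
      · exact ⟨Fin.last n, by rw [hylast, hz]⟩
  have h𝒳' : 𝒳 = Set.range (fun j => Submodule.span K {y j}) := by
    rw [h𝒳]
    ext P
    constructor
    · rintro (⟨i, rfl⟩ | hP)
      · exact ⟨i.castSucc, by dsimp only; rw [hycast]⟩
      · refine ⟨Fin.last n, ?_⟩
        dsimp only
        rw [hylast, Set.mem_singleton_iff.mp hP]
        exact spanneg _
    · rintro ⟨j, rfl⟩
      refine Fin.lastCases ?_ ?_ j
      · dsimp only
        rw [hylast]
        exact Or.inr (spanneg _)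
      · intro i; dsimp only; rw [hycast]; exact Or.inl ⟨i, rfl⟩
  -- the unique linear relation
  have relA : ∀ d : Fin (n + 1) → K, ∑ j, d j • y j = 0 → ∀ i j, d i = d j := by
    intro d hd
    have hexp : ∑ j, d j • y j
        = ∑ i : Fin n, (d i.castSucc - d (Fin.last n)) • x i := by
      rw [Fin.sum_univ_castSucc]
      simp only [hycast, hylast, smul_neg, Finset.smul_sum, sub_smul]
      rw [Finset.sum_sub_distrib]
      abel
    have h0 : ∑ i : Fin n, (d i.castSucc - d (Fin.last n)) • x i = 0 := by
      rw [← hexp, hd]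
    have key : ∀ i : Fin n, d i.castSucc = d (Fin.last n) := by
      intro i
      have := Fintype.linearIndependent_iff.mp hx _ h0 i
      exact sub_eq_zero.mp this
    have key' : ∀ j : Fin (n + 1), d j = d (Fin.last n) := fun j =>
      Fin.lastCases rfl (fun i => key i) j
    intro i j; rw [key' i, key' j]
  have hy0 : ∀ j, y j ≠ 0 := by
    intro j hj
    obtain ⟨k, hk, -⟩ := exists_ne2 j j
    have hrel : ∑ m, (if m = j then (1 : K) else 0) • y m = 0 := by
      simp [ite_smul, Finset.sum_ite_eq', hj]
    have h1 := relA _ hrel j k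
    simp [hk] at h1
  have hspan_inj : ∀ i j : Fin (n + 1),
      Submodule.span K {y i} = Submodule.span K {y j} → i = j := by
    intro i j hij
    by_contra hne
    have hmem : y i ∈ Submodule.span K {y j} := hij ▸ Submodule.mem_span_singleton_self _
    obtain ⟨a, ha⟩ := Submodule.mem_span_singleton.mp hmem
    have hrel : ∑ k, ((if k = i then (1 : K) else 0) - (if k = j then a else 0)) • y k
        = 0 := by
      simp only [sub_smul, ite_smul, one_smul, zero_smul]
      rw [Finset.sum_sub_distrib]
      simp [Finset.sum_ite_eq', ha]
    obtain ⟨k, hki, hkj⟩ := exists_ne2 i j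
    have h1 := relA _ hrel i k
    simp [hne, hki, hkj] at h1
  have hrk1 : ∀ j, Module.finrank K (Submodule.span K {y j}) = 1 := fun j =>
    finrank_span_singleton (hy0 j)
  constructor
  · -- forward direction
    intro h
    -- u maps each line span {y j} to some line span {y (τ j)}
    have hch : ∀ j : Fin (n + 1), ∃ k : Fin (n + 1),
        Submodule.map (u : V →ₗ[K] V) (Submodule.span K {y j})
          = Submodule.span K {y k} := by
      intro j
      have hmem : Submodule.span K {y j} ∈ 𝒳 := by
        rw [h𝒳']; exact ⟨j, rfl⟩
      have := h _ hmem
      rw [h𝒳'] at this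
      obtain ⟨k, hk⟩ := this
      exact ⟨k, hk.symm⟩
    choose τ hτ using hch
    -- u (y j) = c j • y (τ j)
    have hc : ∀ j : Fin (n + 1), ∃ c : K, c ≠ 0 ∧ u (y j) = c • y (τ j) := by
      intro j
      have hmem : u (y j) ∈ Submodule.span K {y (τ j)} := by
        rw [← hτ j]
        exact Submodule.mem_map_of_mem (Submodule.mem_span_singleton_self _)
      obtain ⟨c, hc⟩ := Submodule.mem_span_singleton.mp hmem
      refine ⟨c, ?_, hc.symm⟩
      intro hc0
      apply hy0 j
      apply u.injective
      rw [← hc, hc0, zero_smul, map_zero]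
    choose c hc0 hcy using hc
    -- τ is injective
    have hτinj : Function.Injective τ := by
      intro i j hij
      apply hspan_inj
      have h1 : Submodule.map (u : V →ₗ[K] V) (Submodule.span K {y i})
          = Submodule.map (u : V →ₗ[K] V) (Submodule.span K {y j}) := by
        rw [hτ i, hτ j, hij]
      exact Submodule.map_injective_of_injective u.injective h1
    have hτbij : Function.Bijective τ := (Finite.injective_iff_bijective).mp hτinj
    let σ : Equiv.Perm (Fin (n + 1)) := Equiv.ofBijective τ hτbij
    -- sum relation
    have hsumy : ∑ j, y j = 0 := by
      rw [Fin.sum_univ_castSucc]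
      simp only [hycast, hylast]
      exact add_neg_cancel _
    have hrel : ∑ j, (c (σ.symm j)) • y j = 0 := by
      rw [← Equiv.sum_comp σ (fun j => (c (σ.symm j)) • y j)]
      simp only [Equiv.symm_apply_apply]
      have heach : ∀ j, c j • y (σ j) = u (y j) := fun j => (hcy j).symm
      rw [Finset.sum_congr rfl fun j _ => heach j, ← map_sum, hsumy, map_zero]
    have hcall : ∀ i j, c i = c j := by
      intro i j
      have := relA _ hrel (σ i) (σ j)
      simpa using this
    have hc0ne : c 0 ≠ 0 := hc0 0
    refine ⟨u.trans (LinearEquiv.smulOfNeZero K V (c 0)⁻¹ (inv_ne_zero hc0ne)), ?_, ?_⟩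
    · intro p hp
      rw [← hrangey] at hp
      obtain ⟨j, rfl⟩ := hp
      have hvyj : (u.trans (LinearEquiv.smulOfNeZero K V (c 0)⁻¹ (inv_ne_zero hc0ne))) (y j)
          = (c 0)⁻¹ • u (y j) := rfl
      rw [← hrangey]
      refine ⟨τ j, ?_⟩
      rw [hvyj, hcy j, ← hcall j 0, smul_smul, inv_mul_cancel₀ (hc0 j), one_smul]
    · intro L _
      ext z
      simp only [Submodule.mem_map]
      constructor
      · rintro ⟨l, hl, rfl⟩
        exact ⟨c 0 • l, L.smul_mem _ hl, by
          show (c 0)⁻¹ • u (c 0 • l) = u l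
          rw [map_smul, smul_smul, inv_mul_cancel₀ hc0ne, one_smul]⟩
      · rintro ⟨l, hl, rfl⟩
        refine ⟨(c 0)⁻¹ • l, L.smul_mem _ hl, ?_⟩
        show u ((c 0)⁻¹ • l) = (c 0)⁻¹ • u l
        rw [map_smul]
  · -- backward direction
    rintro ⟨v, hv, heq⟩ P hP
    rw [h𝒳'] at hP ⊢
    obtain ⟨j, rfl⟩ := hP
    rw [heq _ (hrk1 j)]
    have hms : Submodule.map (v : V →ₗ[K] V) (Submodule.span K {y j})
        = Submodule.span K {v (y j)} := by
      simp [Submodule.map_span]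
    rw [hms]
    have hvy : v (y j) ∈ X := hv _ (by rw [← hrangey]; exact ⟨j, rfl⟩)
    rw [← hrangey] at hvy
    obtain ⟨k, hk⟩ := hvy
    exact ⟨k, by dsimp only; rw [hk]⟩
end
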